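/- arXiv:2302.04835 — 11 statements merged into one kernel-verified Lean document; each statement's English description precedes it below -/
import Mathlib

section
/- Suppose the first-order conditions (FOC) hold with pacing multipliers β_i ≥ 0 (i ∈ [n]) and β_p ≥ 0. Then each notification type's budget is spent optimally in the bang-per-buck sense: for every notification type i and any times t₁, t₂ ∈ 𝒯_i, if x^{t₁} > 0 then (p^{t₁} − β_p v_p^{t₁})/v^{t₁} ≤ (p^{t₂} − β_p v_p^{t₂})/v^{t₂}. -/
/-!
At a time `t` with positive allocation the first-order conditions bind with equality,
`β_{i(t)} v^t + β_p v_p^t = p^t`, so the bang-per-buck `(p^t - β_p v_p^t) / v^t` equals `β_{i(t)}`.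
At every other time the bid `β_{i(t)} v^t + β_p v_p^t` is at most `p^t`, so the bang-per-buck is
at least `β_{i(t)}`. Two times of the same type share the multiplier, which gives the comparison.
-/

/-- The first-order conditions at a single time, for allocation `x`, bid `β_{i(t)} v^t + β_p v_p^t`,
notification price `p = p^t` and user price `q = p_{j(t)}`. -/
def SatisfiesFOC (x bid p q : ℝ) : Prop :=
  (x = 0 → bid ≤ p ∧ p = q) ∧ (0 < x → x < 1 → bid = p ∧ p = q) ∧ (x = 1 → bid = p ∧ q ≤ p)

namespace SatisfiesFOC

variable {x bid p q : ℝ}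

theorem bid_eq_of_pos (h : SatisfiesFOC x bid p q) (hx₀ : 0 < x) (hx₁ : x ≤ 1) : bid = p := by
  rcases hx₁.lt_or_eq with hlt | rfl
  · exact (h.2.1 hx₀ hlt).1
  · exact (h.2.2 rfl).1

theorem bid_le (h : SatisfiesFOC x bid p q) (hx : x ∈ Set.Icc (0 : ℝ) 1) : bid ≤ p := by
  rcases hx.1.lt_or_eq with hpos | rfl
  · exact (h.bid_eq_of_pos hpos hx.2).le
  · exact (h.1 rfl).1

end SatisfiesFOC

theorem div_eq_of_mul_add_eq {β v c p : ℝ} (hv : v ≠ 0) (h : β * v + c = p) :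
    (p - c) / v = β := by
  rw [div_eq_iff hv]
  linarith

theorem le_div_of_mul_add_le {β v c p : ℝ} (hv : 0 < v) (h : β * v + c ≤ p) :
    β ≤ (p - c) / v := by
  rw [le_div_iff₀ hv]
  linarith

theorem budget_spent_optimally_notif_type_general
    (T n m : ℕ)
    (it : Fin T → Fin n) (jt : Fin T → Fin m)
    (v vp : Fin T → ℝ) (x : Fin T → ℝ)
    (pu : Fin m → ℝ) (pt : Fin T → ℝ)
    (β : Fin n → ℝ) (βp : ℝ)
    (hv : ∀ t, 0 < v t)
    (hx : ∀ t, x t ∈ Set.Icc (0 : ℝ) 1)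
    (hFOC : ∀ t,
      (x t = 0 → β (it t) * v t + βp * vp t ≤ pt t ∧ pt t = pu (jt t)) ∧
      (0 < x t → x t < 1 → β (it t) * v t + βp * vp t = pt t ∧ pt t = pu (jt t)) ∧
      (x t = 1 → β (it t) * v t + βp * vp t = pt t ∧ pu (jt t) ≤ pt t)) :
    ∀ (i : Fin n) (t₁ t₂ : Fin T), it t₁ = i → it t₂ = i → 0 < x t₁ →
      (pt t₁ - βp * vp t₁) / v t₁ ≤ (pt t₂ - βp * vp t₂) / v t₂ := by
  rintro i t₁ t₂ rfl h₂ hx₁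
  have hbid₁ : β (it t₁) * v t₁ + βp * vp t₁ = pt t₁ :=
    SatisfiesFOC.bid_eq_of_pos (hFOC t₁) hx₁ (hx t₁).2
  have hbid₂ : β (it t₁) * v t₂ + βp * vp t₂ ≤ pt t₂ :=
    h₂ ▸ SatisfiesFOC.bid_le (hFOC t₂) (hx t₂)
  calc (pt t₁ - βp * vp t₁) / v t₁ = β (it t₁) := div_eq_of_mul_add_eq (hv t₁).ne' hbid₁
    _ ≤ (pt t₂ - βp * vp t₂) / v t₂ := le_div_of_mul_add_le (hv t₂) hbid₂

/-- **Budget spent optimally for notification types (Proposition 2, first part).**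
Under the first-order conditions, for any notification type `i` and times
`t₁, t₂ ∈ 𝒯ᵢ`, if `x t₁ > 0` then the bang-per-buck at `t₁` is at least that at `t₂`,
i.e. `(pt t₁ - βp * vp t₁) / v t₁ ≤ (pt t₂ - βp * vp t₂) / v t₂`. -/
theorem budget_spent_optimally_notif_type
    (T n m : ℕ)
    (it : Fin T → Fin n) (jt : Fin T → Fin m)
    (v vp : Fin T → ℝ) (x : Fin T → ℝ)
    (pu : Fin m → ℝ) (pt : Fin T → ℝ)
    (β : Fin n → ℝ) (βp : ℝ)
    (hv : ∀ t, 0 < v t) (hvp : ∀ t, 0 ≤ vp t)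
    (hx : ∀ t, x t ∈ Set.Icc (0 : ℝ) 1)
    (hpu : ∀ j, 0 ≤ pu j) (hpt : ∀ t, 0 ≤ pt t)
    (hβ : ∀ i, 0 ≤ β i) (hβp : 0 ≤ βp)
    (hFOC : ∀ t,
      (x t = 0 → β (it t) * v t + βp * vp t ≤ pt t ∧ pt t = pu (jt t)) ∧
      (0 < x t → x t < 1 → β (it t) * v t + βp * vp t = pt t ∧ pt t = pu (jt t)) ∧
      (x t = 1 → β (it t) * v t + βp * vp t = pt t ∧ pu (jt t) ≤ pt t)) :
    ∀ (i : Fin n) (t₁ t₂ : Fin T), it t₁ = i → it t₂ = i → 0 < x t₁ →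
      (pt t₁ - βp * vp t₁) / v t₁ ≤ (pt t₂ - βp * vp t₂) / v t₂ :=
  budget_spent_optimally_notif_type_general T n m it jt v vp x pu pt β βp hv hx hFOC
end

section
/- Suppose the first-order conditions (FOC) hold with pacing multipliers β_i ≥ 0 (i ∈ [n]) and β_p ≥ 0. Then the platform's budget is spent optimally in the bang-per-buck sense: for any times t₁, t₂ ∈ [𝒯] with v_p^{t₁} > 0 and v_p^{t₂} > 0, if x^{t₁} > 0 then (p^{t₁} − β_{i(t₁)} v^{t₁})/v_p^{t₁} ≤ (p^{t₂} − β_{i(t₂)} v^{t₂})/v_p^{t₂}. -/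
/-!
Under the first-order conditions the effective bid `β_{i(t)} v^t + β_p v_p^t` never exceeds the
price `p^t`, and equals it whenever `x^t > 0`. Hence the platform's bang-per-buck
`(p^t - β_{i(t)} v^t) / v_p^t` is exactly `β_p` at every served notification and at least `β_p`
everywhere else.
-/

/-- The first-order conditions at one notification: allocation `x`, bid `b = β_i v + β_p v_p`,
notification price `p`, user price `q`. -/
def FirstOrderConditionsAt (x b p q : ℝ) : Prop :=
  (x = 0 → b ≤ p ∧ p = q) ∧ (0 < x → x < 1 → b = p ∧ p = q) ∧ (x = 1 → b = p ∧ q ≤ p)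

namespace FirstOrderConditionsAt

variable {x b p q : ℝ}

theorem eq_of_pos (h : FirstOrderConditionsAt x b p q) (hx₁ : x ≤ 1) (hx₀ : 0 < x) : b = p := by
  rcases hx₁.lt_or_eq with hlt | rfl
  · exact (h.2.1 hx₀ hlt).1
  · exact (h.2.2 rfl).1

theorem le (h : FirstOrderConditionsAt x b p q) (hx : x ∈ Set.Icc (0 : ℝ) 1) : b ≤ p := by
  rcases hx.1.lt_or_eq with hpos | rfl
  · exact (h.eq_of_pos hx.2 hpos).le
  · exact (h.1 rfl).1

end FirstOrderConditionsAt

theorem sub_div_eq_of_add_mul_eq {a c p w : ℝ} (hw : w ≠ 0) (h : a + c * w = p) :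
    (p - a) / w = c := by
  rw [div_eq_iff hw, ← h]
  ring

theorem le_sub_div_of_add_mul_le {a c p w : ℝ} (hw : 0 < w) (h : a + c * w ≤ p) :
    c ≤ (p - a) / w := by
  rw [le_div_iff₀ hw]
  linarith

theorem budget_spent_optimally_platform_general
    (T n m : ℕ)
    (it : Fin T → Fin n) (jt : Fin T → Fin m)
    (v vp : Fin T → ℝ) (x : Fin T → ℝ)
    (pu : Fin m → ℝ) (pt : Fin T → ℝ)
    (β : Fin n → ℝ) (βp : ℝ)
    (hx : ∀ t, x t ∈ Set.Icc (0 : ℝ) 1)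
    (hFOC : ∀ t,
      (x t = 0 → β (it t) * v t + βp * vp t ≤ pt t ∧ pt t = pu (jt t)) ∧
      (0 < x t → x t < 1 → β (it t) * v t + βp * vp t = pt t ∧ pt t = pu (jt t)) ∧
      (x t = 1 → β (it t) * v t + βp * vp t = pt t ∧ pu (jt t) ≤ pt t)) :
    ∀ t₁ t₂ : Fin T, 0 < vp t₁ → 0 < vp t₂ → 0 < x t₁ →
      (pt t₁ - β (it t₁) * v t₁) / vp t₁ ≤ (pt t₂ - β (it t₂) * v t₂) / vp t₂ := by
  have hFOCAt (t : Fin T) :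
      FirstOrderConditionsAt (x t) (β (it t) * v t + βp * vp t) (pt t) (pu (jt t)) := hFOC t
  intro t₁ t₂ hvp₁ hvp₂ hx₁
  calc (pt t₁ - β (it t₁) * v t₁) / vp t₁
      = βp := sub_div_eq_of_add_mul_eq hvp₁.ne' <|
        (hFOCAt t₁).eq_of_pos (hx t₁).2 hx₁
    _ ≤ (pt t₂ - β (it t₂) * v t₂) / vp t₂ := le_sub_div_of_add_mul_le hvp₂ <|
        (hFOCAt t₂).le (hx t₂)

/-- **Budget spent optimally for the platform (Proposition 2, second part).**
Under the first-order conditions, for any times `t₁, t₂` with positive platform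
valuations, if `x t₁ > 0` then the platform's bang-per-buck at `t₁` is at least
that at `t₂`: `(pt t₁ - β (it t₁) * v t₁) / vp t₁ ≤ (pt t₂ - β (it t₂) * v t₂) / vp t₂`. -/
theorem budget_spent_optimally_platform
    (T n m : ℕ)
    (it : Fin T → Fin n) (jt : Fin T → Fin m)
    (v vp : Fin T → ℝ) (x : Fin T → ℝ)
    (pu : Fin m → ℝ) (pt : Fin T → ℝ)
    (β : Fin n → ℝ) (βp : ℝ)
    (hv : ∀ t, 0 < v t) (hvp : ∀ t, 0 ≤ vp t)
    (hx : ∀ t, x t ∈ Set.Icc (0 : ℝ) 1)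
    (hpu : ∀ j, 0 ≤ pu j) (hpt : ∀ t, 0 ≤ pt t)
    (hβ : ∀ i, 0 ≤ β i) (hβp : 0 ≤ βp)
    (hFOC : ∀ t,
      (x t = 0 → β (it t) * v t + βp * vp t ≤ pt t ∧ pt t = pu (jt t)) ∧
      (0 < x t → x t < 1 → β (it t) * v t + βp * vp t = pt t ∧ pt t = pu (jt t)) ∧
      (x t = 1 → β (it t) * v t + βp * vp t = pt t ∧ pu (jt t) ≤ pt t)) :
    ∀ t₁ t₂ : Fin T, 0 < vp t₁ → 0 < vp t₂ → 0 < x t₁ →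
      (pt t₁ - β (it t₁) * v t₁) / vp t₁ ≤ (pt t₂ - β (it t₂) * v t₂) / vp t₂ :=
  budget_spent_optimally_platform_general T n m it jt v vp x pu pt β βp hx hFOC
end

section
/- Suppose the first-order conditions (FOC) hold with β_i = B_i/u_i for every notification type i and β_p = B_p/u_p (with u_i > 0 for all i and u_p > 0). Then the total payment at the per-notification prices equals the total budget: Σ_{t ∈ [𝒯]} x^t · p^t = B_p + Σ_{i ∈ [n]} B_i. -/
/-!
By the first-order conditions a notification is paid its bid `β i v^t + β_p v_p^t` whenever it is
allocated at all, so the total payment is `∑_i β_i u_i + β_p u_p`. Since `β_i = B_i / u_i` and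
`β_p = B_p / u_p`, every term `β u` is the corresponding budget.
-/

open Finset

theorem mul_price_eq_mul_bid_of_foc {x bid p q : ℝ} (hx : x ∈ Set.Icc 0 1)
    (hint : 0 < x → x < 1 → bid = p ∧ p = q) (hone : x = 1 → bid = p ∧ q ≤ p) :
    x * p = x * bid := by
  rcases hx.1.eq_or_lt with rfl | hpos
  · simp
  rcases hx.2.lt_or_eq with hlt | rfl
  · rw [(hint hpos hlt).1]
  · rw [(hone rfl).1]

theorem sum_mul_eq_sum_mul_sum_fiber {ι κ R : Type*} [Fintype ι] [Fintype κ] [DecidableEq κ]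
    [NonUnitalNonAssocSemiring R] (f : ι → κ) (g : κ → R) (w : ι → R) :
    ∑ t, g (f t) * w t = ∑ i, g i * ∑ t ∈ univ.filter (fun t => f t = i), w t := by
  rw [← sum_fiberwise univ f]
  refine sum_congr rfl fun i _ => ?_
  rw [mul_sum]
  exact sum_congr rfl fun t ht => by rw [(mem_filter.1 ht).2]

theorem total_payment_equals_total_budget_general
    (T n m : ℕ)
    (it : Fin T → Fin n) (jt : Fin T → Fin m)
    (v vp : Fin T → ℝ) (x : Fin T → ℝ)
    (B : Fin n → ℝ) (Bp : ℝ)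
    (pu : Fin m → ℝ) (pt : Fin T → ℝ)
    (β : Fin n → ℝ) (βp : ℝ)
    (u : Fin n → ℝ) (up : ℝ)
    (hx : ∀ t, x t ∈ Set.Icc (0 : ℝ) 1)
    (hu : ∀ i, u i = ∑ t ∈ univ.filter (fun t => it t = i), v t * x t)
    (hup : up = ∑ t, vp t * x t)
    (hupos : ∀ i, 0 < u i) (huppos : 0 < up)
    (hβ : ∀ i, β i = B i / u i) (hβp : βp = Bp / up)
    (hFOC : ∀ t,
      (x t = 0 → β (it t) * v t + βp * vp t ≤ pt t ∧ pt t = pu (jt t)) ∧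
      (0 < x t → x t < 1 → β (it t) * v t + βp * vp t = pt t ∧ pt t = pu (jt t)) ∧
      (x t = 1 → β (it t) * v t + βp * vp t = pt t ∧ pu (jt t) ≤ pt t)) :
    ∑ t, x t * pt t = Bp + ∑ i, B i := by
  have hpay : ∀ t, x t * pt t = β (it t) * (v t * x t) + βp * (vp t * x t) := fun t => by
    rw [mul_price_eq_mul_bid_of_foc (hx t) (hFOC t).2.1 (hFOC t).2.2]
    ring
  calc ∑ t, x t * pt t = ∑ i, β i * u i + βp * up := by
        simp only [hpay, sum_add_distrib, ← mul_sum, hup, hu,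
          sum_mul_eq_sum_mul_sum_fiber it β fun t => v t * x t]
    _ = Bp + ∑ i, B i := by
        rw [hβp, div_mul_cancel₀ _ huppos.ne', add_comm]
        exact congrArg _ (sum_congr rfl fun i _ => by rw [hβ, div_mul_cancel₀ _ (hupos i).ne'])

/-- **Total payment equals total budget.** If the first-order conditions hold with
`β i = B i / u i` and `βp = Bp / up`, then `∑_t x t * pt t = Bp + ∑_i B i`. -/
theorem total_payment_equals_total_budget
    (T n m : ℕ)
    (it : Fin T → Fin n) (jt : Fin T → Fin m)
    (v vp : Fin T → ℝ) (x : Fin T → ℝ)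
    (B : Fin n → ℝ) (Bp : ℝ)
    (pu : Fin m → ℝ) (pt : Fin T → ℝ)
    (β : Fin n → ℝ) (βp : ℝ)
    (u : Fin n → ℝ) (up : ℝ)
    (hv : ∀ t, 0 < v t) (hvp : ∀ t, 0 ≤ vp t)
    (hx : ∀ t, x t ∈ Set.Icc (0 : ℝ) 1)
    (hB : ∀ i, 0 < B i) (hBp : 0 < Bp)
    (hpu : ∀ j, 0 ≤ pu j) (hpt : ∀ t, 0 ≤ pt t)
    (hu : ∀ i, u i = ∑ t ∈ univ.filter (fun t => it t = i), v t * x t)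
    (hup : up = ∑ t, vp t * x t)
    (hupos : ∀ i, 0 < u i) (huppos : 0 < up)
    (hβ : ∀ i, β i = B i / u i) (hβp : βp = Bp / up)
    (hFOC : ∀ t,
      (x t = 0 → β (it t) * v t + βp * vp t ≤ pt t ∧ pt t = pu (jt t)) ∧
      (0 < x t → x t < 1 → β (it t) * v t + βp * vp t = pt t ∧ pt t = pu (jt t)) ∧
      (x t = 1 → β (it t) * v t + βp * vp t = pt t ∧ pu (jt t) ≤ pt t)) :
    ∑ t, x t * pt t = Bp + ∑ i, B i :=
  total_payment_equals_total_budget_general T n m it jt v vp x B Bp pu pt β βp u up hx hu hup hupos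
    huppos hβ hβp hFOC
end

section
/- Suppose the first-order conditions (FOC) hold with β_i = B_i/u_i with u_i > 0 for every notification type i and β_p ≥ 0, and suppose p^t − β_p v_p^t ≥ 0 for all t. Then every notification type receives a bundle in its demand set: for every i and every vector y with y^t ∈ [0,1] for t ∈ 𝒯_i satisfying Σ_{t ∈ 𝒯_i} y^t (p^t − β_p v_p^t) ≤ B_i, it holds that Σ_{t ∈ 𝒯_i} y^t v^t ≤ Σ_{t ∈ 𝒯_i} x^t v^t. -/
open Finset

/-!
Every notification `t` of type `i` costs at least `β i * v t` at the subsidized price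
`p t - βp * vp t`, whatever case of the first-order conditions it falls in. Hence an
affordable bundle `y` has `β i * ∑ y v ≤ B i = β i * u i`, and dividing by `β i > 0` bounds
its utility by `u i`.
-/

lemma le_of_firstOrderConditions {x a p : ℝ} {P Q R : Prop}
    (hx : x ∈ Set.Icc (0 : ℝ) 1)
    (hFOC : (x = 0 → a ≤ p ∧ P) ∧ (0 < x → x < 1 → a = p ∧ Q) ∧ (x = 1 → a = p ∧ R)) :
    a ≤ p := by
  obtain ⟨hzero, hinterior, hone⟩ := hFOC
  rcases hx.1.eq_or_lt with h0 | h0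
  · exact (hzero h0.symm).1
  rcases hx.2.lt_or_eq with h1 | h1
  · exact (hinterior h0 h1).1.le
  · exact (hone h1).1.le

lemma sum_mul_le_of_mul_le_price {ι : Type*} {s : Finset ι} {y v c : ι → ℝ} {β U : ℝ}
    (hβ : 0 < β) (hc : ∀ t ∈ s, β * v t ≤ c t) (hy : ∀ t ∈ s, 0 ≤ y t)
    (hbudget : ∑ t ∈ s, y t * c t ≤ β * U) :
    ∑ t ∈ s, y t * v t ≤ U := by
  refine le_of_mul_le_mul_left ?_ hβ
  calc β * ∑ t ∈ s, y t * v t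
      = ∑ t ∈ s, y t * (β * v t) := by rw [mul_sum]; exact sum_congr rfl fun _ _ => by ring
    _ ≤ ∑ t ∈ s, y t * c t :=
        sum_le_sum fun t ht => mul_le_mul_of_nonneg_left (hc t ht) (hy t ht)
    _ ≤ β * U := hbudget

theorem notif_type_gets_demand_general
    (T n m : ℕ)
    (it : Fin T → Fin n) (jt : Fin T → Fin m)
    (v vp : Fin T → ℝ) (x : Fin T → ℝ)
    (B : Fin n → ℝ)
    (pu : Fin m → ℝ) (pt : Fin T → ℝ)
    (β : Fin n → ℝ) (βp : ℝ)
    (u : Fin n → ℝ)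
    (hx : ∀ t, x t ∈ Set.Icc (0 : ℝ) 1)
    (hB : ∀ i, 0 < B i)
    (hu : ∀ i, u i = ∑ t ∈ univ.filter (fun t => it t = i), v t * x t)
    (hupos : ∀ i, 0 < u i)
    (hβ : ∀ i, β i = B i / u i)
    (hFOC : ∀ t,
      (x t = 0 → β (it t) * v t + βp * vp t ≤ pt t ∧ pt t = pu (jt t)) ∧
      (0 < x t → x t < 1 → β (it t) * v t + βp * vp t = pt t ∧ pt t = pu (jt t)) ∧
      (x t = 1 → β (it t) * v t + βp * vp t = pt t ∧ pu (jt t) ≤ pt t)) :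
    ∀ (i : Fin n) (y : Fin T → ℝ),
      (∀ t, it t = i → y t ∈ Set.Icc (0 : ℝ) 1) →
      (∑ t ∈ univ.filter (fun t => it t = i), y t * (pt t - βp * vp t)) ≤ B i →
      (∑ t ∈ univ.filter (fun t => it t = i), y t * v t) ≤
        ∑ t ∈ univ.filter (fun t => it t = i), x t * v t := by
  intro i y hy hbudget
  have hβpos : 0 < β i := by rw [hβ]; exact div_pos (hB i) (hupos i)
  have hspent : β i * ∑ t ∈ univ.filter (fun t => it t = i), x t * v t = B i := by
    simp_rw [mul_comm (x _), ← hu i, hβ, div_mul_cancel₀ _ (hupos i).ne']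
  refine sum_mul_le_of_mul_le_price hβpos (fun t ht => ?_)
    (fun t ht => (hy t (mem_filter.mp ht).2).1) (hbudget.trans_eq hspent.symm)
  have hprice := le_of_firstOrderConditions (hx t) (hFOC t)
  rw [(mem_filter.mp ht).2] at hprice
  linarith

/-- **Notification types receive bundles in their demand sets.** Under the
first-order conditions with `β i = B i / u i` (and `u i > 0`), `βp ≥ 0`, and
nonnegative subsidized prices, any affordable bundle `y` for notification type `i`
yields at most the utility of the equilibrium allocation `x`. -/
theorem notif_type_gets_demand
    (T n m : ℕ)
    (it : Fin T → Fin n) (jt : Fin T → Fin m)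
    (v vp : Fin T → ℝ) (x : Fin T → ℝ)
    (B : Fin n → ℝ)
    (pu : Fin m → ℝ) (pt : Fin T → ℝ)
    (β : Fin n → ℝ) (βp : ℝ)
    (u : Fin n → ℝ)
    (hv : ∀ t, 0 < v t) (hvp : ∀ t, 0 ≤ vp t)
    (hx : ∀ t, x t ∈ Set.Icc (0 : ℝ) 1)
    (hB : ∀ i, 0 < B i)
    (hpu : ∀ j, 0 ≤ pu j) (hpt : ∀ t, 0 ≤ pt t)
    (hu : ∀ i, u i = ∑ t ∈ univ.filter (fun t => it t = i), v t * x t)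
    (hupos : ∀ i, 0 < u i)
    (hβ : ∀ i, β i = B i / u i) (hβp : 0 ≤ βp)
    (hsubs : ∀ t, 0 ≤ pt t - βp * vp t)
    (hFOC : ∀ t,
      (x t = 0 → β (it t) * v t + βp * vp t ≤ pt t ∧ pt t = pu (jt t)) ∧
      (0 < x t → x t < 1 → β (it t) * v t + βp * vp t = pt t ∧ pt t = pu (jt t)) ∧
      (x t = 1 → β (it t) * v t + βp * vp t = pt t ∧ pu (jt t) ≤ pt t)) :
    ∀ (i : Fin n) (y : Fin T → ℝ),
      (∀ t, it t = i → y t ∈ Set.Icc (0 : ℝ) 1) →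
      (∑ t ∈ univ.filter (fun t => it t = i), y t * (pt t - βp * vp t)) ≤ B i →
      (∑ t ∈ univ.filter (fun t => it t = i), y t * v t) ≤
        ∑ t ∈ univ.filter (fun t => it t = i), x t * v t :=
  notif_type_gets_demand_general T n m it jt v vp x B pu pt β βp u hx hB hu hupos hβ hFOC
end

section
/- Suppose the first-order conditions (FOC) hold with β_p = B_p/u_p where u_p > 0, and β_i ≥ 0 for each notification type i, and suppose p^t − β_{i(t)} v^t ≥ 0 for all t. Then the platform receives a bundle in its demand set: for every vector y with y^t ∈ [0,1] for t ∈ [𝒯] satisfying Σ_{t ∈ [𝒯]} y^t (p^t − β_{i(t)} v^t) ≤ B_p, it holds that Σ_{t ∈ [𝒯]} y^t v_p^t ≤ Σ_{t ∈ [𝒯]} x^t v_p^t. -/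
/-! At the prices `pt`, each notification's net price `pt t - β (it t) * v t` is at least
`βp * vp t`, with equality wherever `x t > 0` (the first-order conditions). Hence `x` spends
exactly `βp * up = Bp`, while any affordable `y` gets `βp * ∑ y vp ≤ ∑ y · net price ≤ Bp`;
dividing by `βp > 0` gives the claim. This is complementary slackness for the platform's
fractional knapsack problem. -/

open Finset

lemma foc_le_and_eq_of_ne_zero {x bid p : ℝ} {P Q R : Prop} (hx : x ∈ Set.Icc (0 : ℝ) 1)
    (hfoc : (x = 0 → bid ≤ p ∧ P) ∧ (0 < x → x < 1 → bid = p ∧ Q) ∧ (x = 1 → bid = p ∧ R)) :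
    bid ≤ p ∧ (x ≠ 0 → bid = p) := by
  obtain ⟨hzero, hinterior, hone⟩ := hfoc
  rcases hx.1.eq_or_lt with rfl | hpos
  · exact ⟨(hzero rfl).1, fun h => absurd rfl h⟩
  · have hbid : bid = p := by
      rcases hx.2.eq_or_lt with rfl | hlt
      · exact (hone rfl).1
      · exact (hinterior hpos hlt).1
    exact ⟨hbid.le, fun _ => hbid⟩

section ComplementarySlackness

variable {ι : Type*} [Fintype ι] {c w x : ι → ℝ} {r : ℝ}

lemma sum_mul_eq_mul_sum_of_slack (hslack : ∀ t, x t ≠ 0 → c t = r * w t) :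
    ∑ t, x t * c t = r * ∑ t, x t * w t := by
  rw [mul_sum]
  refine sum_congr rfl fun t _ => ?_
  by_cases hxt : x t = 0
  · simp [hxt]
  · rw [hslack t hxt]; ring

lemma sum_mul_le_of_slack {y : ι → ℝ} (hr : 0 < r) (hc : ∀ t, r * w t ≤ c t)
    (hslack : ∀ t, x t ≠ 0 → c t = r * w t) (hy : ∀ t, 0 ≤ y t)
    (hbudget : ∑ t, y t * c t ≤ ∑ t, x t * c t) :
    ∑ t, y t * w t ≤ ∑ t, x t * w t := by
  refine le_of_mul_le_mul_left ?_ hr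
  calc r * ∑ t, y t * w t = ∑ t, y t * (r * w t) := by
        rw [mul_sum]; exact sum_congr rfl fun t _ => by ring
    _ ≤ ∑ t, y t * c t := sum_le_sum fun t _ => mul_le_mul_of_nonneg_left (hc t) (hy t)
    _ ≤ ∑ t, x t * c t := hbudget
    _ = r * ∑ t, x t * w t := sum_mul_eq_mul_sum_of_slack hslack

end ComplementarySlackness

theorem platform_gets_demand_general
    (T n m : ℕ)
    (it : Fin T → Fin n) (jt : Fin T → Fin m)
    (v vp : Fin T → ℝ) (x : Fin T → ℝ)
    (Bp : ℝ)
    (pu : Fin m → ℝ) (pt : Fin T → ℝ)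
    (β : Fin n → ℝ) (βp : ℝ)
    (up : ℝ)
    (hx : ∀ t, x t ∈ Set.Icc (0 : ℝ) 1)
    (hBp : 0 < Bp)
    (hup : up = ∑ t, vp t * x t)
    (huppos : 0 < up)
    (hβp : βp = Bp / up)
    (hFOC : ∀ t,
      (x t = 0 → β (it t) * v t + βp * vp t ≤ pt t ∧ pt t = pu (jt t)) ∧
      (0 < x t → x t < 1 → β (it t) * v t + βp * vp t = pt t ∧ pt t = pu (jt t)) ∧
      (x t = 1 → β (it t) * v t + βp * vp t = pt t ∧ pu (jt t) ≤ pt t)) :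
    ∀ y : Fin T → ℝ,
      (∀ t, y t ∈ Set.Icc (0 : ℝ) 1) →
      (∑ t, y t * (pt t - β (it t) * v t)) ≤ Bp →
      (∑ t, y t * vp t) ≤ ∑ t, x t * vp t := by
  intro y hy hbudget
  have hβp_pos : 0 < βp := hβp ▸ div_pos hBp huppos
  have hfoc t := foc_le_and_eq_of_ne_zero (hx t) (hFOC t)
  have hnet t : βp * vp t ≤ pt t - β (it t) * v t := by linarith [(hfoc t).1]
  have hslack t (hxt : x t ≠ 0) : pt t - β (it t) * v t = βp * vp t := by
    linarith [(hfoc t).2 hxt]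
  have hspend : ∑ t, x t * (pt t - β (it t) * v t) = Bp := by
    have hup' : ∑ t, x t * vp t = up := by simp_rw [hup, mul_comm]
    rw [sum_mul_eq_mul_sum_of_slack hslack, hup', hβp, div_mul_cancel₀ _ huppos.ne']
  exact sum_mul_le_of_slack hβp_pos hnet hslack (fun t => (hy t).1) (hbudget.trans hspend.ge)

/-- **The platform receives a bundle in its demand set.** Under the first-order
conditions with `βp = Bp / up` (and `up > 0`), `β i ≥ 0`, and nonnegative prices net
of the notification-type bids, any affordable bundle `y` for the platform yields at
most the platform utility of the equilibrium allocation `x`. -/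
theorem platform_gets_demand
    (T n m : ℕ)
    (it : Fin T → Fin n) (jt : Fin T → Fin m)
    (v vp : Fin T → ℝ) (x : Fin T → ℝ)
    (Bp : ℝ)
    (pu : Fin m → ℝ) (pt : Fin T → ℝ)
    (β : Fin n → ℝ) (βp : ℝ)
    (up : ℝ)
    (hv : ∀ t, 0 < v t) (hvp : ∀ t, 0 ≤ vp t)
    (hx : ∀ t, x t ∈ Set.Icc (0 : ℝ) 1)
    (hBp : 0 < Bp)
    (hpu : ∀ j, 0 ≤ pu j) (hpt : ∀ t, 0 ≤ pt t)
    (hup : up = ∑ t, vp t * x t)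
    (huppos : 0 < up)
    (hβ : ∀ i, 0 ≤ β i) (hβp : βp = Bp / up)
    (hnet : ∀ t, 0 ≤ pt t - β (it t) * v t)
    (hFOC : ∀ t,
      (x t = 0 → β (it t) * v t + βp * vp t ≤ pt t ∧ pt t = pu (jt t)) ∧
      (0 < x t → x t < 1 → β (it t) * v t + βp * vp t = pt t ∧ pt t = pu (jt t)) ∧
      (x t = 1 → β (it t) * v t + βp * vp t = pt t ∧ pu (jt t) ≤ pt t)) :
    ∀ y : Fin T → ℝ,
      (∀ t, y t ∈ Set.Icc (0 : ℝ) 1) →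
      (∑ t, y t * (pt t - β (it t) * v t)) ≤ Bp →
      (∑ t, y t * vp t) ≤ ∑ t, x t * vp t :=
  platform_gets_demand_general T n m it jt v vp x Bp pu pt β βp up hx hBp hup huppos hβp hFOC
end

section
/- Let x* be a maximizer, over all feasible allocations x (i.e., x^t ∈ [0,1] for all t and Σ_{t ∈ 𝒯_j} x^t ≤ s_j for all users j) whose utilities satisfy u_i(x) > 0 for all i and u_p(x) > 0, of the Eisenberg–Gale objective Σ_{i ∈ [n]} B_i log u_i(x) + B_p log u_p(x), and assume u_i(x*) > 0 for all i and u_p(x*) > 0. Then the supply of every user is exhausted: for every user j, Σ_{t ∈ 𝒯_j} (x*)^t = min(s_j, |𝒯_j|). -/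
/-!
If some user `j` receives less than `min (s j) |𝒯ⱼ|`, then one of its notifications `t₀` has
`x* t₀ < 1` and the user still has slack, so `x* t₀` can be raised by a small `ε > 0` without
leaving the feasible set. This lowers no utility and raises `u_{i(t₀)}` by
`v t₀ * ε > 0`; since every `B i` is positive and `log` is strictly increasing, the EG objective
strictly increases, contradicting maximality.
-/

open Finset

section Perturbation

variable {α : Type*} [DecidableEq α]

theorem sum_mul_add_single (S : Finset α) (w x : α → ℝ) (t₀ : α) (ε : ℝ) :
    ∑ t ∈ S, w t * (x + Pi.single t₀ ε : α → ℝ) t =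
      ∑ t ∈ S, w t * x t + if t₀ ∈ S then w t₀ * ε else 0 := by
  simp only [Pi.add_apply, mul_add, sum_add_distrib, Pi.single_apply, mul_ite, mul_zero,
    sum_ite_eq']

theorem sum_add_single (S : Finset α) (x : α → ℝ) (t₀ : α) (ε : ℝ) :
    ∑ t ∈ S, (x + Pi.single t₀ ε : α → ℝ) t = ∑ t ∈ S, x t + if t₀ ∈ S then ε else 0 := by
  simpa using sum_mul_add_single S 1 x t₀ ε

theorem sum_mul_le_sum_mul_add_single (S : Finset α) {w : α → ℝ} (hw : ∀ t, 0 ≤ w t)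
    (x : α → ℝ) (t₀ : α) {ε : ℝ} (hε : 0 ≤ ε) :
    ∑ t ∈ S, w t * x t ≤ ∑ t ∈ S, w t * (x + Pi.single t₀ ε : α → ℝ) t := by
  rw [sum_mul_add_single]
  split_ifs
  · linarith [mul_nonneg (hw t₀) hε]
  · simp

theorem sum_mul_lt_sum_mul_add_single {S : Finset α} {w : α → ℝ} (x : α → ℝ) {t₀ : α}
    (ht₀ : t₀ ∈ S) (hw : 0 < w t₀) {ε : ℝ} (hε : 0 < ε) :
    ∑ t ∈ S, w t * x t < ∑ t ∈ S, w t * (x + Pi.single t₀ ε : α → ℝ) t := by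
  rw [sum_mul_add_single, if_pos ht₀]
  linarith [mul_pos hw hε]

theorem add_single_mem_Icc {x : α → ℝ} (hx : ∀ t, x t ∈ Set.Icc (0 : ℝ) 1) {t₀ : α} {ε : ℝ}
    (hε₀ : 0 ≤ ε) (hε₁ : ε ≤ 1 - x t₀) (t : α) :
    (x + Pi.single t₀ ε : α → ℝ) t ∈ Set.Icc (0 : ℝ) 1 := by
  obtain ⟨h₀, h₁⟩ := hx t
  rcases eq_or_ne t t₀ with rfl | ht
  · simp only [Pi.add_apply, Pi.single_eq_same]
    constructor <;> linarith
  · simpa [ht] using hx t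

end Perturbation

theorem sum_mul_log_lt_sum_mul_log {ι : Type*} [Fintype ι] {B u u' : ι → ℝ}
    (hB : ∀ i, 0 < B i) (hu : ∀ i, 0 < u i) (hle : ∀ i, u i ≤ u' i) (hlt : ∃ i, u i < u' i) :
    ∑ i, B i * Real.log (u i) < ∑ i, B i * Real.log (u' i) := by
  obtain ⟨i₀, hi₀⟩ := hlt
  refine sum_lt_sum (fun i _ => ?_) ⟨i₀, mem_univ _, ?_⟩
  · exact mul_le_mul_of_nonneg_left (Real.log_le_log (hu i) (hle i)) (hB i).le
  · exact mul_lt_mul_of_pos_left (Real.log_lt_log (hu i₀) hi₀) (hB i₀)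

theorem EG_supply_exhausted_general
    (T n m : ℕ)
    (it : Fin T → Fin n) (jt : Fin T → Fin m)
    (v vp : Fin T → ℝ)
    (B : Fin n → ℝ) (Bp : ℝ) (s : Fin m → ℝ)
    (xstar : Fin T → ℝ)
    (hv : ∀ t, 0 < v t) (hvp : ∀ t, 0 ≤ vp t)
    (hB : ∀ i, 0 < B i) (hBp : 0 < Bp)
    (hfeas : (∀ t, xstar t ∈ Set.Icc (0 : ℝ) 1) ∧
      ∀ j, ∑ t ∈ univ.filter (fun t => jt t = j), xstar t ≤ s j)
    (hpos : (∀ i, 0 < ∑ t ∈ univ.filter (fun t => it t = i), v t * xstar t) ∧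
      0 < ∑ t, vp t * xstar t)
    (hmax : ∀ x : Fin T → ℝ,
      (∀ t, x t ∈ Set.Icc (0 : ℝ) 1) →
      (∀ j, ∑ t ∈ univ.filter (fun t => jt t = j), x t ≤ s j) →
      (∀ i, 0 < ∑ t ∈ univ.filter (fun t => it t = i), v t * x t) →
      (0 < ∑ t, vp t * x t) →
      (∑ i, B i * Real.log (∑ t ∈ univ.filter (fun t => it t = i), v t * x t)) +
          Bp * Real.log (∑ t, vp t * x t) ≤
        (∑ i, B i * Real.log (∑ t ∈ univ.filter (fun t => it t = i), v t * xstar t)) +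
          Bp * Real.log (∑ t, vp t * xstar t)) :
    ∀ j, ∑ t ∈ univ.filter (fun t => jt t = j), xstar t =
      min (s j) ((univ.filter (fun t => jt t = j)).card : ℝ) := by
  obtain ⟨hbox, hsupply⟩ := hfeas
  obtain ⟨hposi, hposp⟩ := hpos
  intro j
  set S := univ.filter (fun t => jt t = j)
  have hcard : ∑ t ∈ S, xstar t ≤ S.card := by
    simpa using sum_le_card_nsmul S xstar 1 fun t _ => (hbox t).2
  refine (le_min (hsupply j) hcard).antisymm (not_lt.mp fun hlt => ?_)
  obtain ⟨t₀, ht₀, hx₁⟩ : ∃ t₀ ∈ S, xstar t₀ < 1 :=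
    exists_lt_of_sum_lt (by simpa using hlt.trans_le (min_le_right _ _))
  set ε := min (1 - xstar t₀) (s j - ∑ t ∈ S, xstar t)
  have hε : 0 < ε := lt_min (by linarith) (by linarith [hlt.trans_le (min_le_left _ _)])
  set x : Fin T → ℝ := xstar + Pi.single t₀ ε
  have hsupply' : ∀ j', ∑ t ∈ univ.filter (fun t => jt t = j'), x t ≤ s j' := by
    intro j'
    rw [sum_add_single]
    split_ifs with h
    · obtain rfl : j = j' := (mem_filter.mp ht₀).2.symm.trans (mem_filter.mp h).2
      linarith [min_le_right (1 - xstar t₀) (s j - ∑ t ∈ S, xstar t)]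
    · simpa using hsupply j'
  have hui : ∀ i, _ ≤ _ := fun i => sum_mul_le_sum_mul_add_single
    (univ.filter (fun t => it t = i)) (fun t => (hv t).le) xstar t₀ hε.le
  have hup := sum_mul_le_sum_mul_add_single univ hvp xstar t₀ hε.le
  have hgain := add_lt_add_of_lt_of_le
    (sum_mul_log_lt_sum_mul_log hB hposi hui
      ⟨it t₀, sum_mul_lt_sum_mul_add_single xstar (by simp) (hv t₀) hε⟩)
    (mul_le_mul_of_nonneg_left (Real.log_le_log hposp hup) hBp.le)
  exact hgain.not_ge (hmax x (add_single_mem_Icc hbox hε.le (min_le_left _ _)) hsupply'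
    (fun i => (hposi i).trans_le (hui i)) (hposp.trans_le hup))

/-- **Supply exhaustion at an Eisenberg–Gale maximizer.** If `x*` maximizes the EG
objective `∑ i, B i * log (uᵢ x) + Bp * log (u_p x)` over feasible allocations with
positive utilities, then for every user `j`, `∑_{t ∈ 𝒯ⱼ} x* t = min (s j) |𝒯ⱼ|`. -/
theorem EG_supply_exhausted
    (T n m : ℕ)
    (it : Fin T → Fin n) (jt : Fin T → Fin m)
    (v vp : Fin T → ℝ)
    (B : Fin n → ℝ) (Bp : ℝ) (s : Fin m → ℝ)
    (xstar : Fin T → ℝ)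
    (hv : ∀ t, 0 < v t) (hvp : ∀ t, 0 ≤ vp t)
    (hB : ∀ i, 0 < B i) (hBp : 0 < Bp) (hs : ∀ j, 0 < s j)
    (hfeas : (∀ t, xstar t ∈ Set.Icc (0 : ℝ) 1) ∧
      ∀ j, ∑ t ∈ univ.filter (fun t => jt t = j), xstar t ≤ s j)
    (hpos : (∀ i, 0 < ∑ t ∈ univ.filter (fun t => it t = i), v t * xstar t) ∧
      0 < ∑ t, vp t * xstar t)
    (hmax : ∀ x : Fin T → ℝ,
      (∀ t, x t ∈ Set.Icc (0 : ℝ) 1) →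
      (∀ j, ∑ t ∈ univ.filter (fun t => jt t = j), x t ≤ s j) →
      (∀ i, 0 < ∑ t ∈ univ.filter (fun t => it t = i), v t * x t) →
      (0 < ∑ t, vp t * x t) →
      (∑ i, B i * Real.log (∑ t ∈ univ.filter (fun t => it t = i), v t * x t)) +
          Bp * Real.log (∑ t, vp t * x t) ≤
        (∑ i, B i * Real.log (∑ t ∈ univ.filter (fun t => it t = i), v t * xstar t)) +
          Bp * Real.log (∑ t, vp t * xstar t)) :
    ∀ j, ∑ t ∈ univ.filter (fun t => jt t = j), xstar t =
      min (s j) ((univ.filter (fun t => jt t = j)).card : ℝ) :=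
  EG_supply_exhausted_general T n m it jt v vp B Bp s xstar hv hvp hB hBp hfeas hpos hmax
end

section
/- Suppose (x, p, β) is an nFPPE: the first-order conditions (FOC) hold, β_i = B_i/u_i for all i and β_p = B_p/u_p (with u_i > 0 for all i and u_p > 0), p^t − β_p v_p^t ≥ 0 for all t, and Σ_{t ∈ 𝒯_j} x^t = s_j for every user j. Assume |𝒯_i ∩ 𝒯_j| ≥ s_j for every notification type i and user j. Let f_i := B_i/(B_p + Σ_{k ∈ [n]} B_k). Then every notification type gets at least its proportional utility: for every i, Σ_{t ∈ 𝒯_i} x^t v^t ≥ Σ_{t ∈ 𝒯_i} v^t · (s_{j(t)} · f_i / |𝒯_i ∩ 𝒯_{j(t)}|). -/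
/-!
Let `f = B_i / (B_p + ∑_k B_k)` and let `y^t = s_{j(t)} f / |𝒯_i ∩ 𝒯_{j(t)}|` be the proportional
bundle of type `i`: then `0 ≤ y ≤ f`, and at user prices `y` costs `f ∑_j p_j s_j`. The FOC give
`β_i v^t ≤ p^t`, with `p^t = p_{j(t)}` unless `x^t = 1`, hence
`β_i v^t y^t ≤ p_{j(t)} y^t + f (p^t - p_{j(t)}) x^t`. Summing over `𝒯_i` and using that the supply
is exhausted, `β_i ∑_{𝒯_i} v^t y^t ≤ f ∑_t p^t x^t`. By the FOC each `p^t x^t` is the bid times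
`x^t`, so the total spend is `B_p + ∑_k B_k` and the right-hand side is `B_i = β_i u_i`.
-/

open Finset

/-- `b` is the bid `β_{i(t)} v^t + β_p v_p^t`, `p` the notification price `p^t`, `q` the user
price `p_{j(t)}` and `x` the allocation `x^t`. -/
def FirstOrderConditions (b p q x : ℝ) : Prop :=
  (x = 0 → b ≤ p ∧ p = q) ∧ (0 < x → x < 1 → b = p ∧ p = q) ∧ (x = 1 → b = p ∧ q ≤ p)

namespace FirstOrderConditions

variable {b p q x : ℝ}

theorem bid_le (h : FirstOrderConditions b p q x) (hx : x ∈ Set.Icc (0 : ℝ) 1) : b ≤ p := by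
  rcases hx.1.eq_or_lt with rfl | hpos
  · exact (h.1 rfl).1
  rcases hx.2.lt_or_eq with hlt | rfl
  · exact (h.2.1 hpos hlt).1.le
  · exact (h.2.2 rfl).1.le

theorem eq_of_lt_one (h : FirstOrderConditions b p q x) (hx : 0 ≤ x) (hlt : x < 1) :
    p = q := by
  rcases hx.eq_or_lt with rfl | hpos
  · exact (h.1 rfl).2
  · exact (h.2.1 hpos hlt).2

theorem userPrice_le (h : FirstOrderConditions b p q x) (hx : x ∈ Set.Icc (0 : ℝ) 1) :
    q ≤ p := by
  rcases hx.2.lt_or_eq with hlt | rfl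
  · exact (h.eq_of_lt_one hx.1 hlt).ge
  · exact (h.2.2 rfl).2

theorem price_mul_eq (h : FirstOrderConditions b p q x) (hx : x ∈ Set.Icc (0 : ℝ) 1) :
    p * x = b * x := by
  rcases hx.1.eq_or_lt with rfl | hpos
  · simp
  rcases hx.2.lt_or_eq with hlt | rfl
  · rw [(h.2.1 hpos hlt).1]
  · rw [(h.2.2 rfl).1]

theorem mul_le_add_premium (h : FirstOrderConditions b p q x) (hx : x ∈ Set.Icc (0 : ℝ) 1)
    {b' y f : ℝ} (hb : b' ≤ b) (hy : y ∈ Set.Icc 0 f) :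
    b' * y ≤ q * y + f * ((p - q) * x) := by
  have hb'y : b' * y ≤ p * y := mul_le_mul_of_nonneg_right (hb.trans (h.bid_le hx)) hy.1
  rcases hx.2.lt_or_eq with hlt | rfl
  · simpa [h.eq_of_lt_one hx.1 hlt] using hb'y
  · have hqp : 0 ≤ p - q := sub_nonneg.2 (h.userPrice_le hx)
    calc b' * y ≤ p * y := hb'y
      _ = q * y + (p - q) * y := by ring
      _ ≤ q * y + f * ((p - q) * 1) := by rw [mul_one, mul_comm f]; gcongr; exact hy.2

end FirstOrderConditions

section Fibers

variable {τ κ : Type*} [Fintype κ] [DecidableEq κ]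

theorem sum_mul_comp_eq_sum_mul_sum_fiber [Fintype τ] (g : τ → κ) (a : κ → ℝ) (w : τ → ℝ) :
    ∑ t, a (g t) * w t = ∑ k, a k * ∑ t ∈ univ.filter (fun t => g t = k), w t := by
  rw [← sum_fiberwise univ g]
  refine sum_congr rfl fun k _ => ?_
  rw [mul_sum]
  exact sum_congr rfl fun t ht => by rw [(mem_filter.1 ht).2]

theorem sum_comp_div_card_fiber (S : Finset τ) (g : τ → κ) (a : κ → ℝ)
    (hS : ∀ k, (S.filter (fun t => g t = k)).Nonempty) :
    ∑ t ∈ S, a (g t) / #(S.filter (fun t' => g t' = g t)) = ∑ k, a k := by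
  rw [← sum_fiberwise S g]
  refine sum_congr rfl fun k _ => ?_
  have hfiber : ∀ t ∈ S.filter (fun t => g t = k),
      a (g t) / #(S.filter (fun t' => g t' = g t)) = a k / #(S.filter (fun t => g t = k)) :=
    fun t ht => by rw [(mem_filter.1 ht).2]
  rw [sum_congr rfl hfiber, sum_const, nsmul_eq_mul,
    mul_div_cancel₀ _ (Nat.cast_ne_zero.2 (hS k).card_pos.ne')]

end Fibers

section Market

variable {τ ν μ : Type*} [Fintype τ] [DecidableEq ν] {it : τ → ν} {jt : τ → μ}
  {v vp x pt : τ → ℝ} {pu : μ → ℝ} {β : ν → ℝ} {βp : ℝ}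

theorem sum_price_mul_eq_total_budget [Fintype ν] {B : ν → ℝ} {Bp : ℝ}
    (hx : ∀ t, x t ∈ Set.Icc (0 : ℝ) 1)
    (hFOC : ∀ t, FirstOrderConditions (β (it t) * v t + βp * vp t) (pt t) (pu (jt t)) (x t))
    (hB : ∀ k, β k * ∑ t ∈ univ.filter (fun t => it t = k), v t * x t = B k)
    (hBp : βp * ∑ t, vp t * x t = Bp) :
    ∑ t, pt t * x t = Bp + ∑ k, B k :=
  calc ∑ t, pt t * x t = ∑ t, (β (it t) * (v t * x t) + βp * (vp t * x t)) :=
        sum_congr rfl fun t _ => by rw [(hFOC t).price_mul_eq (hx t)]; ring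
    _ = ∑ k, β k * ∑ t ∈ univ.filter (fun t => it t = k), v t * x t +
          βp * ∑ t, vp t * x t := by
        rw [sum_add_distrib, sum_mul_comp_eq_sum_mul_sum_fiber, mul_sum]
    _ = Bp + ∑ k, B k := by simp only [hB, hBp, add_comm]

variable [DecidableEq μ]

noncomputable def proportionalBundle (it : τ → ν) (jt : τ → μ) (s : μ → ℝ) (f : ℝ) (i : ν)
    (t : τ) : ℝ :=
  s (jt t) * f / #(univ.filter (fun t' => it t' = i ∧ jt t' = jt t))

theorem proportionalBundle_mem_Icc {s : μ → ℝ} {f : ℝ} {i : ν} (hs : ∀ j, 0 ≤ s j) (hf : 0 ≤ f)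
    (hcard : ∀ j, s j ≤ #(univ.filter (fun t => it t = i ∧ jt t = j))) (t : τ) :
    proportionalBundle it jt s f i t ∈ Set.Icc 0 f :=
  ⟨div_nonneg (mul_nonneg (hs _) hf) (Nat.cast_nonneg _),
    div_le_of_le_mul₀ (Nat.cast_nonneg _) hf
      (by rw [mul_comm]; exact mul_le_mul_of_nonneg_left (hcard _) hf)⟩

theorem sum_mul_proportionalBundle [Fintype μ] (q s : μ → ℝ) (f : ℝ) (i : ν)
    (hne : ∀ j, (univ.filter (fun t => it t = i ∧ jt t = j)).Nonempty) :
    ∑ t ∈ univ.filter (fun t => it t = i), q (jt t) * proportionalBundle it jt s f i t =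
      f * ∑ j, q j * s j := by
  rw [mul_sum, ← sum_comp_div_card_fiber (univ.filter (fun t => it t = i)) jt (fun j => f * (q j * s j))
    (by simpa only [filter_filter] using hne)]
  refine sum_congr rfl fun t _ => ?_
  simp only [proportionalBundle, filter_filter]
  ring

theorem mul_sum_value_le_mul_sum_price [Fintype μ] {i : ν} {s : μ → ℝ} {f : ℝ} {y : τ → ℝ}
    (hx : ∀ t, x t ∈ Set.Icc (0 : ℝ) 1)
    (hFOC : ∀ t, FirstOrderConditions (β (it t) * v t + βp * vp t) (pt t) (pu (jt t)) (x t))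
    (hvp : ∀ t, 0 ≤ vp t) (hβp : 0 ≤ βp)
    (hsupply : ∀ j, ∑ t ∈ univ.filter (fun t => jt t = j), x t = s j)
    (hf : 0 ≤ f) (hy : ∀ t, y t ∈ Set.Icc 0 f)
    (hcost : ∑ t ∈ univ.filter (fun t => it t = i), pu (jt t) * y t ≤ f * ∑ j, pu j * s j) :
    β i * ∑ t ∈ univ.filter (fun t => it t = i), v t * y t ≤ f * ∑ t, pt t * x t := by
  have hpremium : ∑ t ∈ univ.filter (fun t => it t = i), (pt t - pu (jt t)) * x t ≤
      ∑ t, (pt t - pu (jt t)) * x t :=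
    sum_le_sum_of_subset_of_nonneg (filter_subset _ _) fun t _ _ =>
      mul_nonneg (sub_nonneg.2 ((hFOC t).userPrice_le (hx t))) (hx t).1
  have hworth : ∑ j, pu j * s j = ∑ t, pu (jt t) * x t := by
    simp only [sum_mul_comp_eq_sum_mul_sum_fiber jt pu x, hsupply]
  calc β i * ∑ t ∈ univ.filter (fun t => it t = i), v t * y t
      = ∑ t ∈ univ.filter (fun t => it t = i), β (it t) * v t * y t := by
        rw [mul_sum]
        exact sum_congr rfl fun t ht => by rw [(mem_filter.1 ht).2, mul_assoc]
    _ ≤ ∑ t ∈ univ.filter (fun t => it t = i),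
          (pu (jt t) * y t + f * ((pt t - pu (jt t)) * x t)) :=
        sum_le_sum fun t _ => (hFOC t).mul_le_add_premium (hx t)
          (le_add_of_nonneg_right (mul_nonneg hβp (hvp t))) (hy t)
    _ ≤ f * ∑ j, pu j * s j + f * ∑ t, (pt t - pu (jt t)) * x t := by
        rw [sum_add_distrib, ← mul_sum]
        exact add_le_add hcost (mul_le_mul_of_nonneg_left hpremium hf)
    _ = f * ∑ t, pt t * x t := by
        rw [hworth, ← mul_add, ← sum_add_distrib]
        exact congrArg _ (sum_congr rfl fun t _ => by ring)

end Market

theorem nFPPE_proportionality_notif_types_general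
    (T n m : ℕ)
    (it : Fin T → Fin n) (jt : Fin T → Fin m)
    (v vp : Fin T → ℝ) (x : Fin T → ℝ)
    (B : Fin n → ℝ) (Bp : ℝ) (s : Fin m → ℝ)
    (pu : Fin m → ℝ) (pt : Fin T → ℝ)
    (β : Fin n → ℝ) (βp : ℝ)
    (u : Fin n → ℝ) (up : ℝ)
    (hvp : ∀ t, 0 ≤ vp t)
    (hx : ∀ t, x t ∈ Set.Icc (0 : ℝ) 1)
    (hB : ∀ i, 0 < B i) (hBp : 0 < Bp) (hs : ∀ j, 0 < s j)
    (hu : ∀ i, u i = ∑ t ∈ univ.filter (fun t => it t = i), v t * x t)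
    (hup : up = ∑ t, vp t * x t)
    (hupos : ∀ i, 0 < u i) (huppos : 0 < up)
    (hβ : ∀ i, β i = B i / u i) (hβp : βp = Bp / up)
    (hsupply : ∀ j, ∑ t ∈ univ.filter (fun t => jt t = j), x t = s j)
    (hcard : ∀ i j, s j ≤ ((univ.filter (fun t => it t = i ∧ jt t = j)).card : ℝ))
    (hFOC : ∀ t,
      (x t = 0 → β (it t) * v t + βp * vp t ≤ pt t ∧ pt t = pu (jt t)) ∧
      (0 < x t → x t < 1 → β (it t) * v t + βp * vp t = pt t ∧ pt t = pu (jt t)) ∧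
      (x t = 1 → β (it t) * v t + βp * vp t = pt t ∧ pu (jt t) ≤ pt t)) :
    ∀ i, (∑ t ∈ univ.filter (fun t => it t = i),
        v t * (s (jt t) * (B i / (Bp + ∑ k, B k)) /
          ((univ.filter (fun t' => it t' = i ∧ jt t' = jt t)).card : ℝ))) ≤
      ∑ t ∈ univ.filter (fun t => it t = i), x t * v t := by
  intro i
  have hβu : ∀ k, β k * u k = B k := fun k => by rw [hβ k, div_mul_cancel₀ _ (hupos k).ne']
  have htotal : 0 < Bp + ∑ k, B k := add_pos hBp (sum_pos (fun k _ => hB k) ⟨i, mem_univ i⟩)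
  set f := B i / (Bp + ∑ k, B k)
  have hf : 0 ≤ f := (div_pos (hB i) htotal).le
  have hspend : ∑ t, pt t * x t = Bp + ∑ k, B k :=
    sum_price_mul_eq_total_budget hx hFOC (fun k => by rw [← hu k, hβu k])
      (by rw [← hup, hβp, div_mul_cancel₀ _ huppos.ne'])
  have hcost := sum_mul_proportionalBundle pu s f i fun j =>
    card_pos.1 (by exact_mod_cast (hs j).trans_le (hcard i j))
  have hvalue := mul_sum_value_le_mul_sum_price hx hFOC hvp (by rw [hβp]; positivity) hsupply hf
    (proportionalBundle_mem_Icc (fun j => (hs j).le) hf (hcard i)) hcost.le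
  rw [hspend, div_mul_cancel₀ _ htotal.ne', ← hβu i] at hvalue
  calc _ ≤ u i := le_of_mul_le_mul_left hvalue (by rw [hβ]; exact div_pos (hB i) (hupos i))
    _ = _ := by rw [hu i]; exact sum_congr rfl fun t _ => mul_comm _ _

/-- **Proportionality of nFPPE for notification types (Proposition 3, first part).**
In an nFPPE (FOC, paced multipliers `β i = B i / u i`, `βp = Bp / up`, nonnegative
subsidized prices, supply exhausted), every notification type's utility is at least
its proportional utility `∑_{t ∈ 𝒯ᵢ} v t * (s (jt t) * f i / |𝒯ᵢ ∩ 𝒯_{jt t}|)` where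
`f i = B i / (Bp + ∑ k, B k)`. -/
theorem nFPPE_proportionality_notif_types
    (T n m : ℕ)
    (it : Fin T → Fin n) (jt : Fin T → Fin m)
    (v vp : Fin T → ℝ) (x : Fin T → ℝ)
    (B : Fin n → ℝ) (Bp : ℝ) (s : Fin m → ℝ)
    (pu : Fin m → ℝ) (pt : Fin T → ℝ)
    (β : Fin n → ℝ) (βp : ℝ)
    (u : Fin n → ℝ) (up : ℝ)
    (hv : ∀ t, 0 < v t) (hvp : ∀ t, 0 ≤ vp t)
    (hx : ∀ t, x t ∈ Set.Icc (0 : ℝ) 1)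
    (hB : ∀ i, 0 < B i) (hBp : 0 < Bp) (hs : ∀ j, 0 < s j)
    (hpu : ∀ j, 0 ≤ pu j) (hpt : ∀ t, 0 ≤ pt t)
    (hu : ∀ i, u i = ∑ t ∈ univ.filter (fun t => it t = i), v t * x t)
    (hup : up = ∑ t, vp t * x t)
    (hupos : ∀ i, 0 < u i) (huppos : 0 < up)
    (hβ : ∀ i, β i = B i / u i) (hβp : βp = Bp / up)
    (hsubs : ∀ t, 0 ≤ pt t - βp * vp t)
    (hsupply : ∀ j, ∑ t ∈ univ.filter (fun t => jt t = j), x t = s j)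
    (hcard : ∀ i j, s j ≤ ((univ.filter (fun t => it t = i ∧ jt t = j)).card : ℝ))
    (hFOC : ∀ t,
      (x t = 0 → β (it t) * v t + βp * vp t ≤ pt t ∧ pt t = pu (jt t)) ∧
      (0 < x t → x t < 1 → β (it t) * v t + βp * vp t = pt t ∧ pt t = pu (jt t)) ∧
      (x t = 1 → β (it t) * v t + βp * vp t = pt t ∧ pu (jt t) ≤ pt t)) :
    ∀ i, (∑ t ∈ univ.filter (fun t => it t = i),
        v t * (s (jt t) * (B i / (Bp + ∑ k, B k)) /
          ((univ.filter (fun t' => it t' = i ∧ jt t' = jt t)).card : ℝ))) ≤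
      ∑ t ∈ univ.filter (fun t => it t = i), x t * v t :=
  nFPPE_proportionality_notif_types_general T n m it jt v vp x B Bp s pu pt β βp u up hvp hx hB hBp
    hs hu hup hupos huppos hβ hβp hsupply hcard hFOC
end

section
/- Suppose (x, p, β) is an nFPPE: the first-order conditions (FOC) hold, β_i = B_i/u_i for all i and β_p = B_p/u_p (with u_i > 0 for all i and u_p > 0), p^t − β_{i(t)} v^t ≥ 0 for all t, and Σ_{t ∈ 𝒯_j} x^t = s_j for every user j. Assume |𝒯_j| ≥ s_j for every user j. Let f_p := B_p/(B_p + Σ_{k ∈ [n]} B_k). Then the platform gets at least its proportional utility: Σ_{t ∈ [𝒯]} x^t v_p^t ≥ Σ_{t ∈ [𝒯]} v_p^t · (s_{j(t)} / |𝒯_{j(t)}|) · f_p. -/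
open Finset
open scoped BigOperators

/-!
Compare the equilibrium allocation `x` with the uniform allocation `r^t = s_j / |𝒯_j|`, the
mean of `x` over the notifications of user `j = j(t)`. The FOC give
`p^t ≥ β_i v^t + β_p v_p^t ≥ β_p v_p^t` and, since `r^t ≤ 1`, also
`p^t r^t ≤ p^t x^t + p_j (r^t - x^t)`. Both allocations exhaust each user's supply, so the
user-price terms cancel and `β_p ∑ v_p^t r^t ≤ ∑ p^t x^t`. By the FOC the revenue `∑ p^t x^t`
is `∑_i β_i u_i + β_p u_p = ∑_i B_i + B_p`; substituting `β_p = B_p / u_p` gives the bound.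
-/

/-- The FOC at one notification with allocation `x`, bid `b = β_i v + β_p v_p`, notification price
`p` and user price `q`. -/
def FOC (x b p q : ℝ) : Prop :=
  (x = 0 → b ≤ p ∧ p = q) ∧ (0 < x → x < 1 → b = p ∧ p = q) ∧ (x = 1 → b = p ∧ q ≤ p)

namespace FOC

variable {x b p q : ℝ}

theorem bid_le_price (h : FOC x b p q) (hx : x ∈ Set.Icc (0 : ℝ) 1) : b ≤ p := by
  rcases hx.1.eq_or_lt with rfl | hx0
  · exact (h.1 rfl).1
  rcases hx.2.eq_or_lt with rfl | hx1
  · exact (h.2.2 rfl).1.le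
  · exact (h.2.1 hx0 hx1).1.le

theorem price_mul_eq (h : FOC x b p q) (hx : x ∈ Set.Icc (0 : ℝ) 1) : p * x = b * x := by
  rcases hx.1.eq_or_lt with rfl | hx0
  · simp
  rcases hx.2.eq_or_lt with rfl | hx1
  · rw [(h.2.2 rfl).1]
  · rw [(h.2.1 hx0 hx1).1]

theorem price_eq_of_lt_one (h : FOC x b p q) (hx0 : 0 ≤ x) (hx1 : x < 1) : p = q := by
  rcases hx0.eq_or_lt with rfl | hx0
  · exact (h.1 rfl).2
  · exact (h.2.1 hx0 hx1).2

theorem price_mul_le (h : FOC x b p q) (hx : x ∈ Set.Icc (0 : ℝ) 1) {r : ℝ} (hr : r ≤ 1) :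
    p * r ≤ p * x + q * (r - x) := by
  rcases hx.2.eq_or_lt with rfl | hx1
  · nlinarith [(h.2.2 rfl).2]
  · rw [h.price_eq_of_lt_one hx.1 hx1]
    linarith

end FOC

section Fiber

variable {ι κ : Type*} [Fintype ι] [DecidableEq κ]

theorem sum_comp_mul_eq_sum_mul_sum_fiber [Fintype κ] (f : ι → κ) (w : κ → ℝ) (g : ι → ℝ) :
    ∑ t, w (f t) * g t = ∑ k, w k * ∑ t with f t = k, g t := by
  rw [← sum_fiberwise univ f]
  refine sum_congr rfl fun k _ => ?_
  rw [mul_sum]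
  exact sum_congr rfl fun t ht => by rw [(mem_filter.mp ht).2]

noncomputable def fiberMean (f : ι → κ) (x : ι → ℝ) (t : ι) : ℝ :=
  𝔼 t' ∈ univ.filter (f · = f t), x t'

variable (f : ι → κ) {x : ι → ℝ}

theorem fiberMean_mem_Icc {a b : ℝ} (hx : ∀ t, x t ∈ Set.Icc a b) (t : ι) :
    fiberMean f x t ∈ Set.Icc a b := by
  have hne : (univ.filter (f · = f t)).Nonempty := ⟨t, by simp⟩
  exact ⟨le_expect hne fun t' _ => (hx t').1, expect_le hne fun t' _ => (hx t').2⟩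

theorem sum_fiber_fiberMean (x : ι → ℝ) (k : κ) :
    ∑ t with f t = k, fiberMean f x t = ∑ t with f t = k, x t := by
  have hconst : ∀ t ∈ univ.filter (f · = k),
      fiberMean f x t = 𝔼 t' ∈ univ.filter (f · = k), x t' := by
    intro t ht
    rw [fiberMean, (mem_filter.mp ht).2]
  rw [sum_congr rfl hconst, sum_const, card_smul_expect]

theorem sum_comp_mul_fiberMean [Fintype κ] (w : κ → ℝ) (x : ι → ℝ) :
    ∑ t, w (f t) * fiberMean f x t = ∑ t, w (f t) * x t := by
  simp_rw [sum_comp_mul_eq_sum_mul_sum_fiber f w, sum_fiber_fiberMean]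

end Fiber

section Market

variable {ι κ : Type*} [Fintype ι]

theorem sum_price_mul_le_sum_bid_mul {x r b p q : ι → ℝ}
    (hfoc : ∀ t, FOC (x t) (b t) (p t) (q t)) (hx : ∀ t, x t ∈ Set.Icc (0 : ℝ) 1)
    (hr : ∀ t, r t ≤ 1) (hq : ∑ t, q t * r t = ∑ t, q t * x t) :
    ∑ t, p t * r t ≤ ∑ t, b t * x t :=
  calc ∑ t, p t * r t ≤ ∑ t, (p t * x t + q t * (r t - x t)) :=
        sum_le_sum fun t _ => (hfoc t).price_mul_le (hx t) (hr t)
    _ = ∑ t, p t * x t := by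
        simp only [mul_sub, sum_add_distrib, sum_sub_distrib, hq, sub_self, add_zero]
    _ = ∑ t, b t * x t := sum_congr rfl fun t _ => (hfoc t).price_mul_eq (hx t)

theorem sum_bid_mul_eq_sum_budget [Fintype κ] [DecidableEq κ] (it : ι → κ) (v vp x : ι → ℝ)
    (β B : κ → ℝ) (βp Bp : ℝ) (hβ : ∀ i, β i * ∑ t with it t = i, v t * x t = B i)
    (hβp : βp * ∑ t, vp t * x t = Bp) :
    ∑ t, (β (it t) * v t + βp * vp t) * x t = ∑ i, B i + Bp := by
  simp only [add_mul, sum_add_distrib, mul_assoc, sum_comp_mul_eq_sum_mul_sum_fiber it β, hβ,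
    ← mul_sum, hβp]

end Market

theorem nFPPE_proportionality_platform_general
    (T n m : ℕ)
    (it : Fin T → Fin n) (jt : Fin T → Fin m)
    (v vp : Fin T → ℝ) (x : Fin T → ℝ)
    (B : Fin n → ℝ) (Bp : ℝ) (s : Fin m → ℝ)
    (pu : Fin m → ℝ) (pt : Fin T → ℝ)
    (β : Fin n → ℝ) (βp : ℝ)
    (u : Fin n → ℝ) (up : ℝ)
    (hv : ∀ t, 0 < v t)
    (hx : ∀ t, x t ∈ Set.Icc (0 : ℝ) 1)
    (hB : ∀ i, 0 < B i) (hBp : 0 < Bp)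
    (hu : ∀ i, u i = ∑ t ∈ univ.filter (fun t => it t = i), v t * x t)
    (hup : up = ∑ t, vp t * x t)
    (hupos : ∀ i, 0 < u i) (huppos : 0 < up)
    (hβ : ∀ i, β i = B i / u i) (hβp : βp = Bp / up)
    (hsupply : ∀ j, ∑ t ∈ univ.filter (fun t => jt t = j), x t = s j)
    (hFOC : ∀ t,
      (x t = 0 → β (it t) * v t + βp * vp t ≤ pt t ∧ pt t = pu (jt t)) ∧
      (0 < x t → x t < 1 → β (it t) * v t + βp * vp t = pt t ∧ pt t = pu (jt t)) ∧
      (x t = 1 → β (it t) * v t + βp * vp t = pt t ∧ pu (jt t) ≤ pt t)) :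
    (∑ t, vp t * (s (jt t) / ((univ.filter (fun t' => jt t' = jt t)).card : ℝ)) *
        (Bp / (Bp + ∑ k, B k))) ≤
      ∑ t, x t * vp t := by
  have hmean : ∀ t, s (jt t) / ((univ.filter (fun t' => jt t' = jt t)).card : ℝ) =
      fiberMean jt x t := fun t => by
    rw [← hsupply, fiberMean, expect_eq_sum_div_card]
  have hplatform_bid : ∀ t, βp * vp t ≤ β (it t) * v t + βp * vp t := fun t =>
    le_add_of_nonneg_left <| mul_nonneg (hβ (it t) ▸ div_nonneg (hB _).le (hupos _).le) (hv t).le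
  have hrevenue := sum_bid_mul_eq_sum_budget it v vp x β B βp Bp
    (fun i => by rw [← hu, hβ, div_mul_cancel₀ _ (hupos i).ne'])
    (by rw [← hup, hβp, div_mul_cancel₀ _ huppos.ne'])
  have hplatform : βp * ∑ t, vp t * fiberMean jt x t ≤ ∑ k, B k + Bp :=
    calc βp * ∑ t, vp t * fiberMean jt x t = ∑ t, βp * vp t * fiberMean jt x t := by
          simp only [mul_sum, mul_assoc]
      _ ≤ ∑ t, pt t * fiberMean jt x t := sum_le_sum fun t _ => mul_le_mul_of_nonneg_right
          ((hplatform_bid t).trans (FOC.bid_le_price (hFOC t) (hx t)))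
          (fiberMean_mem_Icc jt hx t).1
      _ ≤ ∑ t, (β (it t) * v t + βp * vp t) * x t := sum_price_mul_le_sum_bid_mul hFOC hx
          (fun t => (fiberMean_mem_Icc jt hx t).2) (sum_comp_mul_fiberMean jt pu x)
      _ = ∑ k, B k + Bp := hrevenue
  have hD : 0 < Bp + ∑ k, B k := add_pos_of_pos_of_nonneg hBp (sum_nonneg fun i _ => (hB i).le)
  rw [hβp, div_mul_eq_mul_div, div_le_iff₀ huppos] at hplatform
  simp_rw [hmean, ← sum_mul, mul_comm (x _), ← hup]
  rw [mul_div_assoc', div_le_iff₀ hD]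
  linarith

/-- **Proportionality of nFPPE for the platform (Proposition 3, second part).**
In an nFPPE, the platform's utility is at least its proportional utility
`∑_t vp t * (s (jt t) / |𝒯_{jt t}|) * f_p` where `f_p = Bp / (Bp + ∑ k, B k)`. -/
theorem nFPPE_proportionality_platform
    (T n m : ℕ)
    (it : Fin T → Fin n) (jt : Fin T → Fin m)
    (v vp : Fin T → ℝ) (x : Fin T → ℝ)
    (B : Fin n → ℝ) (Bp : ℝ) (s : Fin m → ℝ)
    (pu : Fin m → ℝ) (pt : Fin T → ℝ)
    (β : Fin n → ℝ) (βp : ℝ)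
    (u : Fin n → ℝ) (up : ℝ)
    (hv : ∀ t, 0 < v t) (hvp : ∀ t, 0 ≤ vp t)
    (hx : ∀ t, x t ∈ Set.Icc (0 : ℝ) 1)
    (hB : ∀ i, 0 < B i) (hBp : 0 < Bp) (hs : ∀ j, 0 < s j)
    (hpu : ∀ j, 0 ≤ pu j) (hpt : ∀ t, 0 ≤ pt t)
    (hu : ∀ i, u i = ∑ t ∈ univ.filter (fun t => it t = i), v t * x t)
    (hup : up = ∑ t, vp t * x t)
    (hupos : ∀ i, 0 < u i) (huppos : 0 < up)
    (hβ : ∀ i, β i = B i / u i) (hβp : βp = Bp / up)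
    (hnet : ∀ t, 0 ≤ pt t - β (it t) * v t)
    (hsupply : ∀ j, ∑ t ∈ univ.filter (fun t => jt t = j), x t = s j)
    (hcard : ∀ j, s j ≤ ((univ.filter (fun t => jt t = j)).card : ℝ))
    (hFOC : ∀ t,
      (x t = 0 → β (it t) * v t + βp * vp t ≤ pt t ∧ pt t = pu (jt t)) ∧
      (0 < x t → x t < 1 → β (it t) * v t + βp * vp t = pt t ∧ pt t = pu (jt t)) ∧
      (x t = 1 → β (it t) * v t + βp * vp t = pt t ∧ pu (jt t) ≤ pt t)) :
    (∑ t, vp t * (s (jt t) / ((univ.filter (fun t' => jt t' = jt t)).card : ℝ)) *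
        (Bp / (Bp + ∑ k, B k))) ≤
      ∑ t, x t * vp t :=
  nFPPE_proportionality_platform_general T n m it jt v vp x B Bp s pu pt β βp u up hv hx hB hBp hu
    hup hupos huppos hβ hβp hsupply hFOC
end

section
/- Suppose (x, p, β) is an nFPPE as in the proportionality result (FOC hold, β_i = B_i/u_i with u_i > 0, β_p = B_p/u_p with u_p > 0, p^t − β_p v_p^t ≥ 0 for all t, Σ_{t ∈ 𝒯_j} x^t = s_j for every user j, and |𝒯_i ∩ 𝒯_j| ≥ s_j for all i, j). For each i let u̲_i := Σ_{t ∈ 𝒯_i} v^t · (s_{j(t)} · f_i / |𝒯_i ∩ 𝒯_{j(t)}|) with f_i := B_i/(B_p + Σ_{k ∈ [n]} B_k), and assume u̲_i > 0. Then the equilibrium pacing multiplier of every notification type is bounded: β_i ≤ B_i / u̲_i. -/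
/-!
Let `f = B i / (B_p + ∑ B)` and give type `i` the proportional share
`y t = s_{j(t)} f / |𝒯_i ∩ 𝒯_{j(t)}|` of each of its notifications, so that `u̲ i` is its
utility under `y`. By the first-order conditions `β i v^t ≤ p^t`, hence `β i u̲ i ≤ ∑ p^t y^t`.
At user prices `y` costs exactly `f ∑_j p_j s_j`, `f` times what the users collect under `x`.
The only other charge is the surcharge `p^t - p_{j(t)} ≥ 0`, which vanishes when `x^t < 1` and
is paid in full when `x^t = 1`; as `y ≤ f`, the cost of `y` is at most `f ∑ p^t x^t`. Every
buyer spends its whole budget at equilibrium, so `∑ p^t x^t = B_p + ∑ B` and `β i u̲ i ≤ B i`.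
-/

open Finset

/-- The first-order conditions for one notification with allocation `x`, bid
`β_{i(t)} v^t + β_p v_p^t`, price `p` and user price `q`. -/
def FOCAt (x bid p q : ℝ) : Prop :=
  (x = 0 → bid ≤ p ∧ p = q) ∧ (0 < x → x < 1 → bid = p ∧ p = q) ∧ (x = 1 → bid = p ∧ q ≤ p)

namespace FOCAt

variable {x bid p q : ℝ}

theorem bid_le (h : FOCAt x bid p q) (hx : x ∈ Set.Icc (0 : ℝ) 1) : bid ≤ p := by
  rcases hx.1.eq_or_lt with h0 | h0
  · exact (h.1 h0.symm).1
  rcases hx.2.eq_or_lt with h1 | h1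
  · exact (h.2.2 h1).1.le
  · exact (h.2.1 h0 h1).1.le

theorem le_price_of_add {a b : ℝ} (h : FOCAt x (a + b) p q) (hx : x ∈ Set.Icc (0 : ℝ) 1)
    (hb : 0 ≤ b) : a ≤ p := by
  linarith [h.bid_le hx]

theorem price_eq_of_lt_one (h : FOCAt x bid p q) (hx : x ∈ Set.Icc (0 : ℝ) 1) (h1 : x < 1) :
    p = q := by
  rcases hx.1.eq_or_lt with h0 | h0
  · exact (h.1 h0.symm).2
  · exact (h.2.1 h0 h1).2

theorem price_mul_eq (h : FOCAt x bid p q) (hx : x ∈ Set.Icc (0 : ℝ) 1) : p * x = bid * x := by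
  rcases hx.1.eq_or_lt with h0 | h0
  · simp [← h0]
  rcases hx.2.eq_or_lt with h1 | h1
  · rw [(h.2.2 h1).1]
  · rw [(h.2.1 h0 h1).1]

theorem surcharge_nonneg (h : FOCAt x bid p q) (hx : x ∈ Set.Icc (0 : ℝ) 1) :
    0 ≤ (p - q) * x := by
  rcases hx.2.eq_or_lt with h1 | h1
  · simpa [h1] using (h.2.2 h1).2
  · simp [h.price_eq_of_lt_one hx h1]

/-- On `x = 1` the surcharge `p - q ≥ 0` is paid in full, on `x < 1` it vanishes. -/
theorem price_mul_le (h : FOCAt x bid p q) (hx : x ∈ Set.Icc (0 : ℝ) 1) {y f : ℝ}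
    (hy : y ∈ Set.Icc 0 f) : p * y ≤ q * y + f * ((p - q) * x) := by
  rcases hx.2.eq_or_lt with h1 | h1
  · have hqp := (h.2.2 h1).2
    rw [h1]
    nlinarith [hy.1, hy.2]
  · simp [h.price_eq_of_lt_one hx h1]

end FOCAt

section Fiberwise

variable {ι κ R : Type*} [DecidableEq κ] [Fintype κ]

theorem sum_comp_mul_eq_sum_mul_sum_fiberwise [CommSemiring R] (s : Finset ι) (g : ι → κ)
    (c : κ → R) (w : ι → R) :
    ∑ t ∈ s, c (g t) * w t = ∑ k, c k * ∑ t ∈ s with g t = k, w t := by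
  rw [← sum_fiberwise s g]
  refine sum_congr rfl fun k _ => ?_
  rw [mul_sum]
  exact sum_congr rfl fun t ht => by rw [(mem_filter.1 ht).2]

theorem sum_div_card_fiber [Semifield R] [CharZero R] (s : Finset ι) (g : ι → κ) (c : κ → R)
    (hne : ∀ k, (s.filter (g · = k)).Nonempty) :
    ∑ t ∈ s, c (g t) / #(s.filter (g · = g t)) = ∑ k, c k := by
  rw [← sum_fiberwise s g]
  refine sum_congr rfl fun k _ => ?_
  have hk : ∀ t ∈ s.filter (g · = k), c (g t) / #(s.filter (g · = g t))
      = c k / #(s.filter (g · = k)) := fun t ht => by rw [(mem_filter.1 ht).2]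
  rw [sum_congr rfl hk, sum_const, nsmul_eq_mul, mul_div_cancel₀]
  exact_mod_cast (hne k).card_pos.ne'

theorem sum_comp_mul_proportional_share [Fintype ι] (P : ι → Prop) [DecidablePred P]
    (g : ι → κ) (c a : κ → ℝ) (x : ι → ℝ) (f : ℝ) (ha : ∀ k, ∑ t with g t = k, x t = a k)
    (hne : ∀ k, (univ.filter fun t => P t ∧ g t = k).Nonempty) :
    ∑ t with P t, c (g t) * (a (g t) * f / #(univ.filter fun t' => P t' ∧ g t' = g t))
      = f * ∑ t, c (g t) * x t := by
  have hfiber : ∀ k, (univ.filter P).filter (g · = k) = univ.filter fun t => P t ∧ g t = k :=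
    fun k => filter_filter _ _ _
  have hspread := sum_div_card_fiber (univ.filter P) g (fun k => f * (c k * a k))
    fun k => hfiber k ▸ hne k
  simp only [hfiber] at hspread
  rw [sum_comp_mul_eq_sum_mul_sum_fiberwise univ g c x, mul_sum]
  simp only [ha]
  rw [← hspread]
  exact sum_congr rfl fun t _ => by ring

end Fiberwise

theorem mul_div_mem_Icc_of_le {a c f : ℝ} (ha : 0 ≤ a) (hac : a ≤ c) (hf : 0 ≤ f) :
    a * f / c ∈ Set.Icc 0 f :=
  have hc : 0 ≤ c := ha.trans hac
  ⟨by positivity,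
    div_le_of_le_mul₀ hc hf (by rw [mul_comm]; exact mul_le_mul_of_nonneg_left hac hf)⟩

section Market

variable {ι : Type*} [Fintype ι] (x p q : ι → ℝ)

theorem sum_price_mul_le_of_FOCAt {bid : ι → ℝ} (hx : ∀ t, x t ∈ Set.Icc (0 : ℝ) 1)
    (hFOC : ∀ t, FOCAt (x t) (bid t) (p t) (q t)) (S : Finset ι) {y : ι → ℝ} {f : ℝ}
    (hf : 0 ≤ f) (hy : ∀ t ∈ S, y t ∈ Set.Icc 0 f)
    (hq : ∑ t ∈ S, q t * y t = f * ∑ t, q t * x t) :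
    ∑ t ∈ S, p t * y t ≤ f * ∑ t, p t * x t := by
  have hsurcharge : ∑ t ∈ S, (p t - q t) * x t ≤ ∑ t, (p t - q t) * x t :=
    sum_le_sum_of_subset_of_nonneg (subset_univ S)
      fun t _ _ => (hFOC t).surcharge_nonneg (hx t)
  calc ∑ t ∈ S, p t * y t
      ≤ ∑ t ∈ S, (q t * y t + f * ((p t - q t) * x t)) :=
        sum_le_sum fun t ht => (hFOC t).price_mul_le (hx t) (hy t ht)
    _ = f * ∑ t, q t * x t + f * ∑ t ∈ S, (p t - q t) * x t := by
        rw [sum_add_distrib, hq, ← mul_sum]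
    _ ≤ f * ∑ t, q t * x t + f * ∑ t, (p t - q t) * x t := by gcongr
    _ = f * ∑ t, p t * x t := by
        rw [← mul_add, ← sum_add_distrib]
        simp only [← add_mul, add_sub_cancel]

theorem sum_price_mul_eq_budget {N : Type*} [Fintype N] [DecidableEq N] (it : ι → N)
    (v vp : ι → ℝ) (B u β : N → ℝ) (Bp up βp : ℝ) (hx : ∀ t, x t ∈ Set.Icc (0 : ℝ) 1)
    (hFOC : ∀ t, FOCAt (x t) (β (it t) * v t + βp * vp t) (p t) (q t))
    (hu : ∀ k, u k = ∑ t with it t = k, v t * x t) (hup : up = ∑ t, vp t * x t)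
    (hupos : ∀ k, 0 < u k) (huppos : 0 < up) (hβ : ∀ k, β k = B k / u k) (hβp : βp = Bp / up) :
    ∑ t, p t * x t = ∑ k, B k + Bp := by
  calc ∑ t, p t * x t
      = ∑ t, β (it t) * (v t * x t) + βp * ∑ t, vp t * x t := by
        rw [mul_sum, ← sum_add_distrib]
        refine sum_congr rfl fun t _ => ?_
        rw [(hFOC t).price_mul_eq (hx t)]
        ring
    _ = ∑ k, β k * u k + βp * up := by
        rw [sum_comp_mul_eq_sum_mul_sum_fiberwise, hup]
        simp only [hu]
    _ = ∑ k, B k + Bp := by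
        simp only [hβ, hβp, div_mul_cancel₀ _ (hupos _).ne', div_mul_cancel₀ _ huppos.ne']

end Market

theorem nFPPE_pacing_multiplier_bound_general
    (T n m : ℕ)
    (it : Fin T → Fin n) (jt : Fin T → Fin m)
    (v vp : Fin T → ℝ) (x : Fin T → ℝ)
    (B : Fin n → ℝ) (Bp : ℝ) (s : Fin m → ℝ)
    (pu : Fin m → ℝ) (pt : Fin T → ℝ)
    (β : Fin n → ℝ) (βp : ℝ)
    (u : Fin n → ℝ) (up : ℝ) (ulow : Fin n → ℝ)
    (hvp : ∀ t, 0 ≤ vp t)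
    (hx : ∀ t, x t ∈ Set.Icc (0 : ℝ) 1)
    (hB : ∀ i, 0 < B i) (hBp : 0 < Bp) (hs : ∀ j, 0 < s j)
    (hu : ∀ i, u i = ∑ t ∈ univ.filter (fun t => it t = i), v t * x t)
    (hup : up = ∑ t, vp t * x t)
    (hupos : ∀ i, 0 < u i) (huppos : 0 < up)
    (hβ : ∀ i, β i = B i / u i) (hβp : βp = Bp / up)
    (hsupply : ∀ j, ∑ t ∈ univ.filter (fun t => jt t = j), x t = s j)
    (hcard : ∀ i j, s j ≤ ((univ.filter (fun t => it t = i ∧ jt t = j)).card : ℝ))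
    (hulow : ∀ i, ulow i = ∑ t ∈ univ.filter (fun t => it t = i),
      v t * (s (jt t) * (B i / (Bp + ∑ k, B k)) /
        ((univ.filter (fun t' => it t' = i ∧ jt t' = jt t)).card : ℝ)))
    (hulowpos : ∀ i, 0 < ulow i)
    (hFOC : ∀ t,
      (x t = 0 → β (it t) * v t + βp * vp t ≤ pt t ∧ pt t = pu (jt t)) ∧
      (0 < x t → x t < 1 → β (it t) * v t + βp * vp t = pt t ∧ pt t = pu (jt t)) ∧
      (x t = 1 → β (it t) * v t + βp * vp t = pt t ∧ pu (jt t) ≤ pt t)) :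
    ∀ i, β i ≤ B i / ulow i := by
  intro i
  rw [le_div_iff₀ (hulowpos i)]
  have htotal : 0 < Bp + ∑ k, B k := add_pos hBp (sum_pos (fun k _ => hB k) ⟨i, mem_univ i⟩)
  have hf : 0 < B i / (Bp + ∑ k, B k) := div_pos (hB i) htotal
  set f := B i / (Bp + ∑ k, B k)
  set y : Fin T → ℝ :=
    fun t => s (jt t) * f / #(univ.filter (fun t' => it t' = i ∧ jt t' = jt t))
  have hy : ∀ t, y t ∈ Set.Icc 0 f := fun t => mul_div_mem_Icc_of_le (hs _).le (hcard i _) hf.le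
  have hne : ∀ j, (univ.filter fun t => it t = i ∧ jt t = j).Nonempty := fun j =>
    card_pos.1 (by exact_mod_cast (hs j).trans_le (hcard i j))
  have hβp_nonneg : 0 ≤ βp := hβp ▸ (div_pos hBp huppos).le
  have hbid : ∀ t, it t = i → β i * v t ≤ pt t := fun t ht =>
    ht ▸ FOCAt.le_price_of_add (hFOC t) (hx t) (mul_nonneg hβp_nonneg (hvp t))
  calc β i * ulow i = ∑ t with it t = i, β i * v t * y t := by
        rw [hulow, mul_sum]; simp only [y, f, mul_assoc]
    _ ≤ ∑ t with it t = i, pt t * y t :=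
        sum_le_sum fun t ht => mul_le_mul_of_nonneg_right (hbid t (mem_filter.1 ht).2)
          (hy t).1
    _ ≤ f * ∑ t, pt t * x t :=
        sum_price_mul_le_of_FOCAt x pt _ hx hFOC _ hf.le (fun t _ => hy t)
          (sum_comp_mul_proportional_share _ jt pu s x f hsupply hne)
    _ = B i := by
        rw [sum_price_mul_eq_budget x pt _ it v vp B u β Bp up βp hx hFOC hu hup hupos huppos
          hβ hβp, add_comm]
        exact div_mul_cancel₀ _ htotal.ne'

/-- **Bound on equilibrium pacing multipliers.** In an nFPPE (as in the
proportionality result), if `u̲ i > 0` denotes the proportional utility of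
notification type `i`, then the equilibrium pacing multiplier satisfies
`β i ≤ B i / u̲ i`. -/
theorem nFPPE_pacing_multiplier_bound
    (T n m : ℕ)
    (it : Fin T → Fin n) (jt : Fin T → Fin m)
    (v vp : Fin T → ℝ) (x : Fin T → ℝ)
    (B : Fin n → ℝ) (Bp : ℝ) (s : Fin m → ℝ)
    (pu : Fin m → ℝ) (pt : Fin T → ℝ)
    (β : Fin n → ℝ) (βp : ℝ)
    (u : Fin n → ℝ) (up : ℝ) (ulow : Fin n → ℝ)
    (hv : ∀ t, 0 < v t) (hvp : ∀ t, 0 ≤ vp t)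
    (hx : ∀ t, x t ∈ Set.Icc (0 : ℝ) 1)
    (hB : ∀ i, 0 < B i) (hBp : 0 < Bp) (hs : ∀ j, 0 < s j)
    (hpu : ∀ j, 0 ≤ pu j) (hpt : ∀ t, 0 ≤ pt t)
    (hu : ∀ i, u i = ∑ t ∈ univ.filter (fun t => it t = i), v t * x t)
    (hup : up = ∑ t, vp t * x t)
    (hupos : ∀ i, 0 < u i) (huppos : 0 < up)
    (hβ : ∀ i, β i = B i / u i) (hβp : βp = Bp / up)
    (hsubs : ∀ t, 0 ≤ pt t - βp * vp t)
    (hsupply : ∀ j, ∑ t ∈ univ.filter (fun t => jt t = j), x t = s j)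
    (hcard : ∀ i j, s j ≤ ((univ.filter (fun t => it t = i ∧ jt t = j)).card : ℝ))
    (hulow : ∀ i, ulow i = ∑ t ∈ univ.filter (fun t => it t = i),
      v t * (s (jt t) * (B i / (Bp + ∑ k, B k)) /
        ((univ.filter (fun t' => it t' = i ∧ jt t' = jt t)).card : ℝ)))
    (hulowpos : ∀ i, 0 < ulow i)
    (hFOC : ∀ t,
      (x t = 0 → β (it t) * v t + βp * vp t ≤ pt t ∧ pt t = pu (jt t)) ∧
      (0 < x t → x t < 1 → β (it t) * v t + βp * vp t = pt t ∧ pt t = pu (jt t)) ∧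
      (x t = 1 → β (it t) * v t + βp * vp t = pt t ∧ pu (jt t) ≤ pt t)) :
    ∀ i, β i ≤ B i / ulow i :=
  nFPPE_pacing_multiplier_bound_general T n m it jt v vp x B Bp s pu pt β βp u up ulow hvp hx hB hBp
    hs hu hup hupos huppos hβ hβp hsupply hcard hulow hulowpos hFOC
end

section
/- Suppose (x, p, β) satisfies the nSPPE conditions (2) and (4): x^t = 1 if β_{i(t)} v^t + β_p v_p^t ≥ p_{j(t)} and x^t = 0 otherwise, and for every notification type i, Σ_{t ∈ 𝒯_i} x^t (p_{j(t)} − β_p v_p^t) = B_i, with β_i > 0 for all i. Then each notification type buys a bundle in its demand set given the subsidized prices: for every i and every vector y with y^t ∈ [0,1] for t ∈ 𝒯_i satisfying Σ_{t ∈ 𝒯_i} y^t (p_{j(t)} − β_p v_p^t) ≤ B_i, it holds that Σ_{t ∈ 𝒯_i} y^t v^t ≤ Σ_{t ∈ 𝒯_i} x^t v^t. -/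
/-! Weak duality for the fractional knapsack problem: with `β > 0` as multiplier of the budget
constraint, the threshold bundle `x` maximises `β * value - cost` item by item, and it exhausts the
budget, so no affordable `y` can have more value. -/

open Finset

lemma mul_le_mul_of_threshold {a x y : ℝ} (hy : y ∈ Set.Icc (0 : ℝ) 1)
    (hx₁ : 0 ≤ a → x = 1) (hx₀ : a < 0 → x = 0) : y * a ≤ x * a := by
  rcases le_or_gt 0 a with ha | ha
  · rw [hx₁ ha]; nlinarith [hy.2]
  · rw [hx₀ ha]; nlinarith [hy.1]

theorem Finset.sum_mul_le_of_threshold {ι : Type*} (S : Finset ι) {v c x y : ι → ℝ} {β : ℝ}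
    (hβ : 0 < β)
    (hx : ∀ t ∈ S, (c t ≤ β * v t → x t = 1) ∧ (β * v t < c t → x t = 0))
    (hy : ∀ t ∈ S, y t ∈ Set.Icc (0 : ℝ) 1)
    (hcost : ∑ t ∈ S, y t * c t ≤ ∑ t ∈ S, x t * c t) :
    ∑ t ∈ S, y t * v t ≤ ∑ t ∈ S, x t * v t := by
  have surplus_le : ∑ t ∈ S, y t * (β * v t - c t) ≤ ∑ t ∈ S, x t * (β * v t - c t) :=
    sum_le_sum fun t ht => mul_le_mul_of_threshold (hy t ht)
      (fun h => (hx t ht).1 (sub_nonneg.1 h)) (fun h => (hx t ht).2 (sub_neg.1 h))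
  have surplus_eq (z : ι → ℝ) :
      ∑ t ∈ S, z t * (β * v t - c t) = β * ∑ t ∈ S, z t * v t - ∑ t ∈ S, z t * c t := by
    rw [mul_sum, ← sum_sub_distrib]
    exact sum_congr rfl fun t _ => by ring
  rw [surplus_eq, surplus_eq] at surplus_le
  exact le_of_mul_le_mul_left (by linarith) hβ

theorem nSPPE_notif_type_demand_general
    (T n m : ℕ)
    (it : Fin T → Fin n) (jt : Fin T → Fin m)
    (v vp : Fin T → ℝ) (x : Fin T → ℝ)
    (B : Fin n → ℝ)
    (pu : Fin m → ℝ)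
    (β : Fin n → ℝ) (βp : ℝ)
    (hβ : ∀ i, 0 < β i)
    (halloc : ∀ t,
      (pu (jt t) ≤ β (it t) * v t + βp * vp t → x t = 1) ∧
      (β (it t) * v t + βp * vp t < pu (jt t) → x t = 0))
    (hbudget : ∀ i, ∑ t ∈ univ.filter (fun t => it t = i),
      x t * (pu (jt t) - βp * vp t) = B i) :
    ∀ (i : Fin n) (y : Fin T → ℝ),
      (∀ t, it t = i → y t ∈ Set.Icc (0 : ℝ) 1) →
      (∑ t ∈ univ.filter (fun t => it t = i), y t * (pu (jt t) - βp * vp t)) ≤ B i →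
      (∑ t ∈ univ.filter (fun t => it t = i), y t * v t) ≤
        ∑ t ∈ univ.filter (fun t => it t = i), x t * v t := by
  intro i y hy hcost
  refine sum_mul_le_of_threshold _ (hβ i) (fun t ht => ?_) (fun t ht => hy t (mem_filter.1 ht).2)
    (hcost.trans (hbudget i).ge)
  rw [← (mem_filter.1 ht).2, sub_le_iff_le_add, lt_sub_iff_add_lt]
  exact halloc t

/-- **nSPPE notification types buy demand bundles (Proposition 4).** Under nSPPE
conditions (2) (winning bids allocated) and (4) (budgets cleared), with `β i > 0`,
every notification type buys a utility-maximizing bundle given the subsidized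
prices: any affordable `y ∈ [0,1]^{𝒯ᵢ}` yields at most the utility of `x`. -/
theorem nSPPE_notif_type_demand
    (T n m : ℕ)
    (it : Fin T → Fin n) (jt : Fin T → Fin m)
    (v vp : Fin T → ℝ) (x : Fin T → ℝ)
    (B : Fin n → ℝ) (Bp : ℝ)
    (pu : Fin m → ℝ)
    (β : Fin n → ℝ) (βp : ℝ)
    (hv : ∀ t, 0 < v t) (hvp : ∀ t, 0 ≤ vp t)
    (hB : ∀ i, 0 < B i) (hBp : 0 < Bp)
    (hpu : ∀ j, 0 ≤ pu j)
    (hβ : ∀ i, 0 < β i) (hβp : 0 ≤ βp)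
    (halloc : ∀ t,
      (pu (jt t) ≤ β (it t) * v t + βp * vp t → x t = 1) ∧
      (β (it t) * v t + βp * vp t < pu (jt t) → x t = 0))
    (hbudget : ∀ i, ∑ t ∈ univ.filter (fun t => it t = i),
      x t * (pu (jt t) - βp * vp t) = B i) :
    ∀ (i : Fin n) (y : Fin T → ℝ),
      (∀ t, it t = i → y t ∈ Set.Icc (0 : ℝ) 1) →
      (∑ t ∈ univ.filter (fun t => it t = i), y t * (pu (jt t) - βp * vp t)) ≤ B i →
      (∑ t ∈ univ.filter (fun t => it t = i), y t * v t) ≤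
        ∑ t ∈ univ.filter (fun t => it t = i), x t * v t :=
  nSPPE_notif_type_demand_general T n m it jt v vp x B pu β βp hβ halloc hbudget
end

section
/- Strong duality for the Eisenberg–Gale program: assume every 𝒯_i is nonempty, s_j > 0 for all j, v^t > 0 for all t, and there exists t with v_p^t > 0. Then the supremum, over feasible allocations x (x^t ∈ [0,1], Σ_{t ∈ 𝒯_j} x^t ≤ s_j) with u_i(x) > 0 for all i and u_p(x) > 0, of Σ_{i ∈ [n]} B_i log u_i(x) + B_p log u_p(x), equals the infimum, over p ∈ ℝ_{≥0}^m, λ ∈ ℝ_{≥0}^{𝒯}, β_i > 0, β_p > 0 with p_{j(t)} ≥ β_{i(t)} v^t + β_p v_p^t − λ^t for all t, of Σ_{j ∈ [m]} s_j p_j + Σ_{t ∈ [𝒯]} λ^t − Σ_{i ∈ [n]} B_i log β_i − B_p log β_p + Σ_{i ∈ [n]} (B_i log B_i − B_i) + (B_p log B_p − B_p). -/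
open Finset Real Set

/-!
Weak duality is the Fenchel inequality `B log u ≤ β u + (B log B - B) - B log β`, summed over the
notification types and the platform, together with `∑ (β v + βp vp) x ≤ ∑ s p + ∑ λ`, which is
where the dual constraints and the feasibility of `x` enter.

For the converse, the objective attains its maximum at some allocation `xs`: the allocations form a
compact set, and the objective tends to `-∞` as any utility tends to `0`. Put `β = B / u(xs)` and
`βp = Bp / u_p(xs)`. First-order optimality of the concave objective at `xs` says that `xs`
maximizes the linear functional with coefficients `c t = β (i t) v t + βp vp t` over all
allocations. This linear program splits into one fractional knapsack per user. Its dual gives the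
prices `p j` and `λ t = max 0 (c t - p (j t))`, and with these the dual objective equals the
primal objective at `xs`.
-/

theorem mul_log_le_mul_add_sub_mul_log {B β u : ℝ} (hB : 0 < B) (hβ : 0 < β) (hu : 0 < u) :
    B * log u ≤ β * u + (B * log B - B) - B * log β := by
  have h := mul_le_mul_of_nonneg_left
    (log_le_sub_one_of_pos (by positivity : 0 < β * u / B)) hB.le
  rw [log_div (by positivity) hB.ne', log_mul hβ.ne' hu.ne'] at h
  linarith [mul_div_cancel₀ (β * u) hB.ne']

theorem mul_log_eq_mul_add_sub_mul_log {B β u : ℝ} (hB : 0 < B) (hu : 0 < u)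
    (hβu : β * u = B) :
    B * log u = β * u + (B * log B - B) - B * log β := by
  rw [hβu, eq_div_of_mul_eq hu.ne' hβu, log_div hB.ne' hu.ne']
  ring

theorem exp_le_of_le_sum_mul_log {κ : Type*} [Fintype κ] {w a : κ → ℝ} {U L : ℝ}
    (hw : ∀ k, 0 < w k) (ha : ∀ k, 0 < a k) (haU : ∀ k, a k ≤ U) (hU : 1 ≤ U)
    (hL : L ≤ ∑ k, w k * log (a k)) (k : κ) :
    exp ((L - ∑ j, w j * log U) / w k) ≤ a k := by
  classical
  have hlogU : ∀ j, w j * log (a j) ≤ w j * log U := fun j =>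
    mul_le_mul_of_nonneg_left (log_le_log (ha j) (haU j)) (hw j).le
  have hrest : ∑ j ∈ univ.erase k, w j * log (a j) ≤ ∑ j, w j * log U :=
    (sum_le_sum fun j _ => hlogU j).trans <|
      sum_le_sum_of_subset_of_nonneg (erase_subset k univ)
        fun j _ _ => mul_nonneg (hw j).le (log_nonneg hU)
  rw [← add_sum_erase univ _ (mem_univ k)] at hL
  rw [← le_log_iff_exp_le (ha k), div_le_iff₀' (hw k)]
  linarith

theorem exists_forall_sum_mul_log_le {X κ : Type*} [TopologicalSpace X] [Fintype κ]
    {K : Set X} (hK : IsCompact K) {g : κ → X → ℝ} (hg : ∀ k, Continuous (g k))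
    {w : κ → ℝ} (hw : ∀ k, 0 < w k) {x₀ : X} (hx₀K : x₀ ∈ K) (hx₀ : ∀ k, 0 < g k x₀) :
    ∃ xs ∈ K, (∀ k, 0 < g k xs) ∧ ∀ x ∈ K, (∀ k, 0 < g k x) →
      ∑ k, w k * log (g k x) ≤ ∑ k, w k * log (g k xs) := by
  set F : X → ℝ := fun x => ∑ k, w k * log (g k x)
  obtain ⟨C, hC⟩ := hK.exists_bound_of_continuousOn (continuous_pi hg).continuousOn
  have hgU : ∀ x ∈ K, ∀ k, g k x ≤ max 1 C := fun x hx k =>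
    (le_abs_self _).trans <| (norm_le_pi_norm (fun k => g k x) k).trans <|
      (hC x hx).trans (le_max_right _ _)
  -- On the superlevel set `F ≥ F x₀` every `g k` is at least `δ k > 0`, so it suffices to
  -- maximize over the compact set `K'`, on which `F` is continuous.
  set δ : κ → ℝ := fun k => exp ((F x₀ - ∑ j, w j * log (max 1 C)) / w k)
  have hδ : ∀ x ∈ K, (∀ k, 0 < g k x) → F x₀ ≤ F x → ∀ k, δ k ≤ g k x :=
    fun x hx hgx hFx => exp_le_of_le_sum_mul_log hw hgx (hgU x hx) (le_max_left _ _) hFx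
  set K' := K ∩ {x | ∀ k, δ k ≤ g k x}
  have hK' : IsCompact K' := by
    refine hK.inter_right ?_
    simp only [ofPred_forall]
    exact isClosed_iInter fun k => isClosed_le continuous_const (hg k)
  have hpos : ∀ x ∈ K', ∀ k, 0 < g k x := fun x hx k => (exp_pos _).trans_le (hx.2 k)
  have hFcont : ContinuousOn F K' :=
    continuousOn_finsetSum _ fun k _ => continuousOn_const.mul <|
      (hg k).continuousOn.log fun x hx => (hpos x hx k).ne'
  have hx₀K' : x₀ ∈ K' := ⟨hx₀K, hδ x₀ hx₀K hx₀ le_rfl⟩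
  obtain ⟨xs, hxs, hmax⟩ := hK'.exists_isMaxOn ⟨x₀, hx₀K'⟩ hFcont
  refine ⟨xs, hxs.1, hpos xs hxs, fun x hx hgx => ?_⟩
  by_contra! hlt
  have hx' : x ∈ K' := ⟨hx, hδ x hx hgx ((hmax hx₀K').trans hlt.le)⟩
  exact (hmax hx').not_gt hlt

theorem sum_mul_div_le_sum_of_forall_sum_mul_log_le {κ : Type*} [Fintype κ] {w a a' : κ → ℝ}
    (ha : ∀ k, 0 < a k)
    (hmax : ∀ θ ∈ Ioo (0 : ℝ) 1,
      ∑ k, w k * log ((1 - θ) * a k + θ * a' k) ≤ ∑ k, w k * log (a k)) :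
    ∑ k, w k * (a' k / a k) ≤ ∑ k, w k := by
  set φ : ℝ → ℝ := fun θ => ∑ k, w k * log ((1 - θ) * a k + θ * a' k)
  have hφ : HasDerivAt φ (∑ k, w k * ((a' k - a k) / a k)) 0 := by
    refine HasDerivAt.fun_sum fun k _ => HasDerivAt.const_mul _ ?_
    have hlin : HasDerivAt (fun θ : ℝ => (1 - θ) * a k + θ * a' k) (a' k - a k) 0 := by
      have hrw : (fun θ : ℝ => (1 - θ) * a k + θ * a' k) =
          fun θ => a k + θ * (a' k - a k) := by
        funext θ; ring
      rw [hrw]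
      exact (hasDerivAt_mul_const _).const_add _
    simpa using hlin.log (by simpa using (ha k).ne')
  have hφmax : IsLocalMaxOn φ (Ico 0 1) 0 := by
    refine IsMaxOn.localize fun θ hθ => ?_
    rcases hθ.1.eq_or_lt with rfl | hθ0
    · exact le_refl (φ 0)
    simpa [φ] using hmax θ ⟨hθ0, hθ.2⟩
  have hhalf : (1 / 2 : ℝ) - 0 ∈ posTangentConeAt (Ico 0 1) (0 : ℝ) :=
    sub_mem_posTangentConeAt_of_segment_subset <| by
      rw [segment_eq_Icc (by norm_num)]
      exact Icc_subset_Ico_right (by norm_num)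
  have hd := hφmax.hasFDerivWithinAt_nonpos hφ.hasFDerivAt.hasFDerivWithinAt hhalf
  simp only [ContinuousLinearMap.toSpanSingleton_apply, smul_eq_mul] at hd
  have : ∑ k, w k * ((a' k - a k) / a k) = ∑ k, w k * (a' k / a k) - ∑ k, w k := by
    rw [← sum_sub_distrib]
    exact sum_congr rfl fun k _ => by field_simp [(ha k).ne']
  linarith

theorem max_zero_sub_eq_sub_mul {c p x : ℝ} (hx : x ∈ Icc (0 : ℝ) 1) (hlt : x < 1 → c ≤ p)
    (hpos : 0 < x → p ≤ c) : max 0 (c - p) = (c - p) * x := by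
  rcases hx.2.eq_or_lt with h1 | h1
  · rw [h1, mul_one, max_eq_right (sub_nonneg.2 (hpos (h1 ▸ one_pos)))]
  rcases hx.1.eq_or_lt with h0 | h0
  · rw [← h0, mul_zero, max_eq_left (sub_nonpos.2 (hlt h1))]
  · rw [le_antisymm (hlt h1) (hpos h0), sub_self, zero_mul, max_self]

theorem csSup_eq_csInf_of_forall_le {α : Type*} [ConditionallyCompleteLattice α] {P D : Set α}
    {a b : α} (hPD : ∀ x ∈ P, ∀ y ∈ D, x ≤ y) (ha : a ∈ P) (hb : b ∈ D) (hba : b ≤ a) :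
    sSup P = sInf D := by
  obtain rfl := le_antisymm (hPD a ha b hb) hba
  rw [IsGreatest.csSup_eq ⟨ha, fun x hx => hPD x hx a hb⟩,
    IsLeast.csInf_eq ⟨hb, fun y hy => hPD a ha y hy⟩]

theorem sum_mul_smul_add_smul {τ : Type*} (S : Finset τ) (f x y : τ → ℝ) (a b : ℝ) :
    ∑ t ∈ S, f t * (a • x + b • y) t =
      a * ∑ t ∈ S, f t * x t + b * ∑ t ∈ S, f t * y t := by
  simp only [Pi.add_apply, Pi.smul_apply, smul_eq_mul, mul_sum, ← sum_add_distrib]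
  exact sum_congr rfl fun t _ => by ring

theorem sum_mul_sum_fiber {τ ι : Type*} [Fintype τ] [Fintype ι] [DecidableEq ι] (g : τ → ι)
    (a : ι → ℝ) (f : τ → ℝ) :
    ∑ i, a i * ∑ t ∈ univ.filter (fun t => g t = i), f t = ∑ t, a (g t) * f t := by
  rw [← sum_fiberwise univ g (fun t => a (g t) * f t)]
  refine sum_congr rfl fun i _ => ?_
  rw [mul_sum]
  exact sum_congr rfl fun t ht => by rw [(mem_filter.1 ht).2]

theorem sum_add_pi_single_apply {τ : Type*} [DecidableEq τ] (S : Finset τ) (x : τ → ℝ) (t : τ)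
    (δ : ℝ) :
    ∑ r ∈ S, (x + Pi.single t δ : τ → ℝ) r = ∑ r ∈ S, x r + if t ∈ S then δ else 0 := by
  simp [sum_add_distrib]

theorem sum_mul_add_pi_single_apply {τ : Type*} [Fintype τ] [DecidableEq τ] (c x : τ → ℝ)
    (t : τ) (δ : ℝ) : ∑ r, c r * (x + Pi.single t δ : τ → ℝ) r = ∑ r, c r * x r + c t * δ := by
  simp [mul_add, sum_add_distrib, Pi.single_apply]

section Allocations

variable {τ J : Type*} [Fintype τ] [DecidableEq J]

def allocations (jt : τ → J) (s : J → ℝ) : Set (τ → ℝ) :=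
  {x | (∀ t, x t ∈ Icc (0 : ℝ) 1) ∧ ∀ j, ∑ t ∈ univ.filter (fun t => jt t = j), x t ≤ s j}

variable {jt : τ → J} {s : J → ℝ}

theorem convex_allocations : Convex ℝ (allocations jt s) := by
  rintro x ⟨hx01, hxs⟩ y ⟨hy01, hys⟩ a b ha hb hab
  refine ⟨fun t => ⟨?_, ?_⟩, fun j => ?_⟩
  · simp only [Pi.add_apply, Pi.smul_apply, smul_eq_mul]
    nlinarith [mul_nonneg ha (hx01 t).1, mul_nonneg hb (hy01 t).1]
  · simp only [Pi.add_apply, Pi.smul_apply, smul_eq_mul]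
    nlinarith [mul_le_mul_of_nonneg_left (hx01 t).2 ha,
      mul_le_mul_of_nonneg_left (hy01 t).2 hb]
  · simp only [Pi.add_apply, Pi.smul_apply, smul_eq_mul, sum_add_distrib, ← mul_sum]
    have hsj : s j = a * s j + b * s j := by rw [← add_mul, hab, one_mul]
    linarith [mul_le_mul_of_nonneg_left (hxs j) ha, mul_le_mul_of_nonneg_left (hys j) hb]

theorem isCompact_allocations : IsCompact (allocations jt s) := by
  have h : allocations jt s = (univ.pi fun _ => Icc 0 1) ∩
      ⋂ j, {x | ∑ t ∈ univ.filter (fun t => jt t = j), x t ≤ s j} := by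
    ext x
    simp only [allocations, mem_inter_iff, Set.mem_pi, Set.mem_univ, forall_const, mem_iInter,
      mem_ofPred_eq]
  rw [h]
  exact (isCompact_univ_pi fun _ => isCompact_Icc).inter_right <|
    isClosed_iInter fun j => isClosed_le (by fun_prop) continuous_const

theorem exists_pos_mem_allocations (hs : ∀ j, 0 < s j) :
    ∃ x ∈ allocations jt s, ∀ t, 0 < x t := by
  set N : ℝ := (Fintype.card τ : ℝ)
  have hpos : ∀ t, 0 < min 1 (s (jt t) / N) := fun t =>
    lt_min one_pos (div_pos (hs _) (Nat.cast_pos.2 (Fintype.card_pos_iff.2 ⟨t⟩)))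
  have hfiber : ∀ j, ∑ t ∈ univ.filter (fun t => jt t = j), min 1 (s (jt t) / N) ≤ s j := by
    intro j
    calc ∑ t ∈ univ.filter (fun t => jt t = j), min 1 (s (jt t) / N)
        ≤ ∑ t ∈ univ.filter (fun t => jt t = j), s j / N :=
          sum_le_sum fun t ht => (mem_filter.1 ht).2 ▸ min_le_right _ _
      _ = #(univ.filter fun t => jt t = j) * (s j / N) := by rw [sum_const, nsmul_eq_mul]
      _ ≤ N * (s j / N) := by
          have := (hs j).le
          gcongr
          exact (Nat.cast_le.2 (card_le_univ _) : _ ≤ (Fintype.card τ : ℝ))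
      _ ≤ s j := by
          rcases eq_or_ne N 0 with h | h
          · simp [h, (hs j).le]
          · rw [mul_div_cancel₀ _ h]
  exact ⟨_, ⟨fun t => ⟨(hpos t).le, min_le_left _ _⟩, hfiber⟩, hpos⟩

variable {c x : τ → ℝ}

theorem sum_fiber_eq_of_lt_one (hx : x ∈ allocations jt s)
    (hopt : IsMaxOn (fun y => ∑ r, c r * y r) (allocations jt s) x) {t : τ} (hc : 0 < c t)
    (hxt : x t < 1) : ∑ r ∈ univ.filter (fun r => jt r = jt t), x r = s (jt t) := by
  classical
  by_contra hne
  have hslack := lt_of_le_of_ne (hx.2 (jt t)) hne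
  set δ := min (1 - x t) (s (jt t) - ∑ r ∈ univ.filter (fun r => jt r = jt t), x r)
  have hδ : 0 < δ := lt_min (by linarith) (by linarith)
  have hδt : δ ≤ 1 - x t := min_le_left _ _
  have hδj : δ ≤ s (jt t) - ∑ r ∈ univ.filter (fun r => jt r = jt t), x r := min_le_right _ _
  have hy : x + Pi.single t δ ∈ allocations jt s := by
    refine ⟨fun r => ?_, fun j => ?_⟩
    · rcases eq_or_ne r t with rfl | hr
      · simp only [Pi.add_apply, Pi.single_eq_same]
        constructor <;> linarith [(hx.1 r).1]
      · simpa [hr] using hx.1 r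
    · rw [sum_add_pi_single_apply]
      split_ifs with hj <;> simp only [mem_filter, Finset.mem_univ, true_and] at hj
      · subst hj
        linarith
      · simpa using hx.2 j
  have := isMaxOn_iff.1 hopt _ hy
  rw [sum_mul_add_pi_single_apply] at this
  nlinarith [mul_pos hc hδ]

theorem le_of_lt_one_of_pos (hx : x ∈ allocations jt s)
    (hopt : IsMaxOn (fun y => ∑ r, c r * y r) (allocations jt s) x) {t t' : τ}
    (hjt : jt t' = jt t) (ht : 0 < x t) (ht' : x t' < 1) : c t' ≤ c t := by
  classical
  by_contra! hlt
  set δ := min (x t) (1 - x t')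
  have hδ : 0 < δ := lt_min ht (by linarith)
  have hδt : δ ≤ x t := min_le_left _ _
  have hδt' : δ ≤ 1 - x t' := min_le_right _ _
  have hy : x + Pi.single t' δ + Pi.single t (-δ) ∈ allocations jt s := by
    refine ⟨fun r => ?_, fun j => ?_⟩
    · simp only [Pi.add_apply, Pi.single_apply]
      have := hx.1 r
      split_ifs with h1 h2 h2 <;> subst_vars <;> simp only [Set.mem_Icc] at this ⊢ <;>
        constructor <;> linarith
    · rw [sum_add_pi_single_apply, sum_add_pi_single_apply]
      simp only [mem_filter, Finset.mem_univ, true_and, hjt]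
      split_ifs <;> simpa using hx.2 j
  have := isMaxOn_iff.1 hopt _ hy
  rw [sum_mul_add_pi_single_apply, sum_mul_add_pi_single_apply] at this
  nlinarith

theorem exists_price (hx : x ∈ allocations jt s)
    (hopt : IsMaxOn (fun y => ∑ r, c r * y r) (allocations jt s) x) (hc : ∀ t, 0 < c t)
    (j : J) : ∃ p, 0 ≤ p ∧ (∀ t, jt t = j → x t < 1 → c t ≤ p) ∧
      (∀ t, jt t = j → 0 < x t → p ≤ c t) ∧
      (0 < p → ∑ t ∈ univ.filter (fun t => jt t = j), x t = s j) := by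
  by_cases h : ∃ t, jt t = j ∧ x t < 1
  · obtain ⟨t₁, ht₁, hmax⟩ := (univ.filter fun t => jt t = j ∧ x t < 1).exists_max_image c
      (let ⟨t, ht⟩ := h; ⟨t, by simpa using ht⟩)
    simp only [mem_filter, Finset.mem_univ, true_and] at ht₁ hmax
    refine ⟨c t₁, (hc t₁).le, fun t hjt hxt => hmax t ⟨hjt, hxt⟩,
      fun t hjt hxt => le_of_lt_one_of_pos hx hopt (ht₁.1.trans hjt.symm) hxt ht₁.2,
      fun _ => ?_⟩
    rw [← ht₁.1]
    exact sum_fiber_eq_of_lt_one hx hopt (hc t₁) ht₁.2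
  · simp only [not_exists, not_and, not_lt] at h
    exact ⟨0, le_rfl, fun t hjt hxt => absurd hxt (h t hjt).not_gt, fun t _ _ => (hc t).le,
      fun h0 => absurd h0 (lt_irrefl 0)⟩

theorem exists_prices_sum_eq [Fintype J] (hx : x ∈ allocations jt s)
    (hopt : IsMaxOn (fun y => ∑ r, c r * y r) (allocations jt s) x) (hc : ∀ t, 0 < c t) :
    ∃ p : J → ℝ, (∀ j, 0 ≤ p j) ∧
      ∑ j, s j * p j + ∑ t, max 0 (c t - p (jt t)) = ∑ t, c t * x t := by
  choose p hp hlow hhigh hsat using exists_price hx hopt hc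
  have hsupply : ∀ j, s j * p j = p j * ∑ t ∈ univ.filter (fun t => jt t = j), x t := by
    intro j
    rcases (hp j).eq_or_lt with h0 | h0
    · rw [← h0, mul_zero, zero_mul]
    · rw [hsat j h0, mul_comm]
  refine ⟨p, hp, ?_⟩
  rw [sum_congr rfl fun j _ => hsupply j, sum_mul_sum_fiber,
    sum_congr rfl fun t _ => max_zero_sub_eq_sub_mul (hx.1 t) (hlow _ t rfl) (hhigh _ t rfl),
    ← sum_add_distrib]
  exact sum_congr rfl fun t _ => by ring

end Allocations

section EisenbergGale

variable {τ ι J : Type*} [Fintype τ] [DecidableEq ι]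

def typeUtility (it : τ → ι) (v x : τ → ℝ) (i : ι) : ℝ :=
  ∑ t ∈ univ.filter (fun t => it t = i), v t * x t

def agentUtility (it : τ → ι) (v vp x : τ → ℝ) : Option ι → ℝ :=
  fun k => k.elim (∑ t, vp t * x t) (typeUtility it v x)

variable {it : τ → ι} {v vp : τ → ℝ}

theorem continuous_agentUtility (k : Option ι) :
    Continuous fun x => agentUtility it v vp x k := by
  cases k <;> simp only [agentUtility, typeUtility, Option.elim] <;> fun_prop

theorem agentUtility_pos_iff {x : τ → ℝ} :
    (∀ k, 0 < agentUtility it v vp x k) ↔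
      (∀ i, 0 < typeUtility it v x i) ∧ 0 < ∑ t, vp t * x t := by
  simp [Option.forall, agentUtility, and_comm]

variable [Fintype ι] [DecidableEq J]

def egFeasible (it : τ → ι) (jt : τ → J) (v vp : τ → ℝ) (s : J → ℝ) : Set (τ → ℝ) :=
  {x | x ∈ allocations jt s ∧ (∀ i, 0 < typeUtility it v x i) ∧ 0 < ∑ t, vp t * x t}

noncomputable def egObjective (it : τ → ι) (v vp : τ → ℝ) (B : ι → ℝ) (Bp : ℝ)
    (x : τ → ℝ) : ℝ :=
  ∑ i, B i * log (typeUtility it v x i) + Bp * log (∑ t, vp t * x t)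

noncomputable def egDualObjective [Fintype J] (B : ι → ℝ) (Bp : ℝ) (s : J → ℝ) (p : J → ℝ)
    (lam : τ → ℝ) (β : ι → ℝ) (βp : ℝ) : ℝ :=
  ∑ j, s j * p j + ∑ t, lam t - ∑ i, B i * log (β i) - Bp * log βp +
    ∑ i, (B i * log (B i) - B i) + (Bp * log Bp - Bp)

variable {jt : τ → J} {B : ι → ℝ} {Bp : ℝ} {s : J → ℝ}

theorem sum_mul_typeUtility_add (β : ι → ℝ) (βp : ℝ) (x : τ → ℝ) :
    ∑ i, β i * typeUtility it v x i + βp * ∑ t, vp t * x t =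
      ∑ t, (β (it t) * v t + βp * vp t) * x t := by
  simp only [typeUtility]
  rw [sum_mul_sum_fiber, mul_sum, ← sum_add_distrib]
  exact sum_congr rfl fun t _ => by ring

theorem egObjective_eq_sum_agentUtility (x : τ → ℝ) :
    egObjective it v vp B Bp x = ∑ k, k.elim Bp B * log (agentUtility it v vp x k) := by
  simp [egObjective, agentUtility, Fintype.sum_option, add_comm]

theorem egObjective_le_egDualObjective [Fintype J] (hB : ∀ i, 0 < B i) (hBp : 0 < Bp)
    {x : τ → ℝ} (hx : x ∈ egFeasible it jt v vp s) {p : J → ℝ} {lam : τ → ℝ} {β : ι → ℝ}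
    {βp : ℝ} (hp : ∀ j, 0 ≤ p j) (hlam : ∀ t, 0 ≤ lam t) (hβ : ∀ i, 0 < β i) (hβp : 0 < βp)
    (hfeas : ∀ t, β (it t) * v t + βp * vp t - lam t ≤ p (jt t)) :
    egObjective it v vp B Bp x ≤ egDualObjective B Bp s p lam β βp := by
  obtain ⟨⟨hx01, hxs⟩, hu, hup⟩ := hx
  have hlin : ∑ t, (β (it t) * v t + βp * vp t) * x t ≤ ∑ j, s j * p j + ∑ t, lam t :=
    calc ∑ t, (β (it t) * v t + βp * vp t) * x t
        ≤ ∑ t, (p (jt t) * x t + lam t) := sum_le_sum fun t _ => by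
          nlinarith [mul_le_mul_of_nonneg_right (sub_le_iff_le_add.1 (hfeas t)) (hx01 t).1,
            mul_le_mul_of_nonneg_left (hx01 t).2 (hlam t)]
      _ = ∑ j, p j * ∑ t ∈ univ.filter (fun t => jt t = j), x t + ∑ t, lam t := by
          rw [sum_add_distrib, sum_mul_sum_fiber]
      _ ≤ ∑ j, s j * p j + ∑ t, lam t := add_le_add_left (sum_le_sum fun j _ => by
          rw [mul_comm (s j)]
          exact mul_le_mul_of_nonneg_left (hxs j) (hp j)) _
  have htypes := sum_le_sum fun i (_ : i ∈ Finset.univ) =>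
    mul_log_le_mul_add_sub_mul_log (hB i) (hβ i) (hu i)
  simp only [sum_add_distrib, sum_sub_distrib] at htypes
  have hplatform := mul_log_le_mul_add_sub_mul_log hBp hβp hup
  rw [egObjective, egDualObjective, sum_sub_distrib]
  linarith [sum_mul_typeUtility_add (it := it) (v := v) (vp := vp) β βp x]

theorem exists_isMaxOn_egObjective (hv : ∀ t, 0 < v t) (hvp : ∀ t, 0 ≤ vp t)
    (hvpex : ∃ t, 0 < vp t) (hTi : ∀ i, ∃ t, it t = i) (hB : ∀ i, 0 < B i) (hBp : 0 < Bp)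
    (hs : ∀ j, 0 < s j) :
    ∃ xs ∈ egFeasible it jt v vp s,
      IsMaxOn (egObjective it v vp B Bp) (egFeasible it jt v vp s) xs := by
  obtain ⟨x₀, hx₀, hx₀pos⟩ := exists_pos_mem_allocations (jt := jt) hs
  have hx₀u : ∀ i, 0 < typeUtility it v x₀ i := fun i =>
    let ⟨t, ht⟩ := hTi i
    sum_pos (fun r _ => mul_pos (hv r) (hx₀pos r)) ⟨t, by simp [ht]⟩
  have hx₀p : 0 < ∑ t, vp t * x₀ t :=
    let ⟨t, ht⟩ := hvpex
    sum_pos' (fun r _ => mul_nonneg (hvp r) (hx₀pos r).le)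
      ⟨t, mem_univ t, mul_pos ht (hx₀pos t)⟩
  obtain ⟨xs, hxs, hxspos, hmax⟩ := exists_forall_sum_mul_log_le
    (w := fun k : Option ι => k.elim Bp B) isCompact_allocations continuous_agentUtility
    (fun k => by cases k <;> simp [hBp, hB]) hx₀ (agentUtility_pos_iff.2 ⟨hx₀u, hx₀p⟩)
  refine ⟨xs, ⟨hxs, agentUtility_pos_iff.1 hxspos⟩, isMaxOn_iff.2 fun x hx => ?_⟩
  simpa only [egObjective_eq_sum_agentUtility] using
    hmax x hx.1 (agentUtility_pos_iff.2 hx.2)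

theorem sum_mul_div_le_of_isMaxOn (hv : ∀ t, 0 ≤ v t) (hvp : ∀ t, 0 ≤ vp t) {xs : τ → ℝ}
    (hxs : xs ∈ egFeasible it jt v vp s)
    (hmax : IsMaxOn (egObjective it v vp B Bp) (egFeasible it jt v vp s) xs) {y : τ → ℝ}
    (hy : y ∈ allocations jt s) :
    ∑ i, B i * (typeUtility it v y i / typeUtility it v xs i) +
      Bp * ((∑ t, vp t * y t) / ∑ t, vp t * xs t) ≤ ∑ i, B i + Bp := by
  have hxs' := agentUtility_pos_iff.2 hxs.2
  have hy0 : ∀ k, 0 ≤ agentUtility it v vp y k := by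
    rintro (_ | i)
    · exact sum_nonneg fun t _ => mul_nonneg (hvp t) (hy.1 t).1
    · exact sum_nonneg fun t _ => mul_nonneg (hv t) (hy.1 t).1
  have hlin : ∀ (θ : ℝ) k, agentUtility it v vp ((1 - θ) • xs + θ • y) k =
      (1 - θ) * agentUtility it v vp xs k + θ * agentUtility it v vp y k := by
    rintro θ (_ | i) <;> exact sum_mul_smul_add_smul _ _ _ _ _ _
  have key := sum_mul_div_le_sum_of_forall_sum_mul_log_le
    (w := fun k : Option ι => k.elim Bp B) hxs' fun θ hθ => by
      have hmem : (1 - θ) • xs + θ • y ∈ egFeasible it jt v vp s := by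
        refine ⟨convex_allocations hxs.1 hy (by linarith [hθ.2]) hθ.1.le (by ring),
          agentUtility_pos_iff.1 fun k => ?_⟩
        rw [hlin]
        exact add_pos_of_pos_of_nonneg (mul_pos (by linarith [hθ.2]) (hxs' k))
          (mul_nonneg hθ.1.le (hy0 k))
      have := isMaxOn_iff.1 hmax _ hmem
      rwa [egObjective_eq_sum_agentUtility, egObjective_eq_sum_agentUtility,
        funext (hlin θ)] at this
  simpa [Fintype.sum_option, agentUtility, add_comm] using key

theorem exists_egDualObjective_eq [Fintype J] (hv : ∀ t, 0 < v t) (hvp : ∀ t, 0 ≤ vp t)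
    (hB : ∀ i, 0 < B i) (hBp : 0 < Bp) {xs : τ → ℝ} (hxs : xs ∈ egFeasible it jt v vp s)
    (hmax : IsMaxOn (egObjective it v vp B Bp) (egFeasible it jt v vp s) xs) :
    ∃ (p : J → ℝ) (lam : τ → ℝ) (β : ι → ℝ) (βp : ℝ),
      (∀ j, 0 ≤ p j) ∧ (∀ t, 0 ≤ lam t) ∧ (∀ i, 0 < β i) ∧ 0 < βp ∧
      (∀ t, β (it t) * v t + βp * vp t - lam t ≤ p (jt t)) ∧
      egDualObjective B Bp s p lam β βp = egObjective it v vp B Bp xs := by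
  obtain ⟨hxsA, hu, hup⟩ := hxs
  set u := typeUtility it v xs
  set up := ∑ t, vp t * xs t
  -- The Lagrange multipliers of the utility definitions are `B / u`; `c t` is then the
  -- marginal value of notification `t` at the optimum.
  set β : ι → ℝ := fun i => B i / u i with hβ
  set βp : ℝ := Bp / up with hβp
  set c : τ → ℝ := fun t => β (it t) * v t + βp * vp t
  have hβu : ∀ i, β i * u i = B i := fun i => div_mul_cancel₀ _ (hu i).ne'
  have hβpu : βp * up = Bp := div_mul_cancel₀ _ hup.ne'
  have hβpos : ∀ i, 0 < β i := fun i => div_pos (hB i) (hu i)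
  have hβppos : 0 < βp := div_pos hBp hup
  have hc : ∀ t, 0 < c t := fun t =>
    add_pos_of_pos_of_nonneg (mul_pos (hβpos _) (hv t)) (mul_nonneg hβppos.le (hvp t))
  have hcy : ∀ y, ∑ t, c t * y t = ∑ i, B i * (typeUtility it v y i / u i) +
      Bp * ((∑ t, vp t * y t) / up) := fun y => by
    rw [← sum_mul_typeUtility_add]
    simp only [hβ, hβp, div_mul_eq_mul_div, mul_div_assoc]
  have hcxs : ∑ t, c t * xs t = ∑ i, β i * u i + βp * up :=
    (sum_mul_typeUtility_add β βp xs).symm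
  have hopt : IsMaxOn (fun y => ∑ t, c t * y t) (allocations jt s) xs :=
    isMaxOn_iff.2 fun y hy => by
      rw [hcy, hcxs, hβpu, sum_congr rfl fun i _ => hβu i]
      exact sum_mul_div_le_of_isMaxOn (fun t => (hv t).le) hvp ⟨hxsA, hu, hup⟩ hmax hy
  obtain ⟨p, hp, hpsum⟩ := exists_prices_sum_eq hxsA hopt hc
  refine ⟨p, fun t => max 0 (c t - p (jt t)), β, βp, hp, fun t => le_max_left _ _, hβpos,
    hβppos, fun t => by linarith [le_max_right 0 (c t - p (jt t))], ?_⟩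
  have htypes : ∑ i, B i * log (u i) =
      ∑ i, β i * u i + ∑ i, (B i * log (B i) - B i) - ∑ i, B i * log (β i) := by
    rw [← sum_add_distrib, ← sum_sub_distrib]
    exact sum_congr rfl fun i _ => mul_log_eq_mul_add_sub_mul_log (hB i) (hu i) (hβu i)
  have hplatform := mul_log_eq_mul_add_sub_mul_log hBp hup hβpu
  rw [egDualObjective, egObjective, hpsum, hcxs, htypes, hplatform]
  ring

end EisenbergGale

/-- **Strong duality for the Eisenberg–Gale program.** The supremum of the primal
objective over feasible allocations with positive utilities equals the infimum of
the dual objective over dual-feasible `(p, λ, β, βp)`. -/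
theorem EG_strong_duality
    (T n m : ℕ)
    (it : Fin T → Fin n) (jt : Fin T → Fin m)
    (v vp : Fin T → ℝ)
    (B : Fin n → ℝ) (Bp : ℝ) (s : Fin m → ℝ)
    (hv : ∀ t, 0 < v t) (hvp : ∀ t, 0 ≤ vp t)
    (hvpex : ∃ t, 0 < vp t)
    (hTi : ∀ i : Fin n, ∃ t, it t = i)
    (hB : ∀ i, 0 < B i) (hBp : 0 < Bp) (hs : ∀ j, 0 < s j) :
    sSup {y : ℝ | ∃ x : Fin T → ℝ,
        (∀ t, x t ∈ Set.Icc (0 : ℝ) 1) ∧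
        (∀ j, ∑ t ∈ univ.filter (fun t => jt t = j), x t ≤ s j) ∧
        (∀ i, 0 < ∑ t ∈ univ.filter (fun t => it t = i), v t * x t) ∧
        (0 < ∑ t, vp t * x t) ∧
        y = (∑ i, B i * Real.log (∑ t ∈ univ.filter (fun t => it t = i), v t * x t)) +
          Bp * Real.log (∑ t, vp t * x t)} =
      sInf {y : ℝ | ∃ (p : Fin m → ℝ) (lam : Fin T → ℝ) (β : Fin n → ℝ) (βp : ℝ),
        (∀ j, 0 ≤ p j) ∧ (∀ t, 0 ≤ lam t) ∧ (∀ i, 0 < β i) ∧ 0 < βp ∧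
        (∀ t, β (it t) * v t + βp * vp t - lam t ≤ p (jt t)) ∧
        y = (∑ j, s j * p j) + (∑ t, lam t)
          - (∑ i, B i * Real.log (β i)) - Bp * Real.log βp
          + (∑ i, (B i * Real.log (B i) - B i)) + (Bp * Real.log Bp - Bp)} := by
  obtain ⟨xs, hxs, hmax⟩ := exists_isMaxOn_egObjective (jt := jt) hv hvp hvpex hTi hB hBp hs
  obtain ⟨p, lam, β, βp, hp, hlam, hβ, hβp, hfeas, hdual⟩ :=
    exists_egDualObjective_eq hv hvp hB hBp hxs hmax
  refine csSup_eq_csInf_of_forall_le ?_ ⟨xs, hxs.1.1, hxs.1.2, hxs.2.1, hxs.2.2, rfl⟩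
    ⟨p, lam, β, βp, hp, hlam, hβ, hβp, hfeas, rfl⟩ hdual.le
  rintro _ ⟨x, hx01, hxs, hu, hup, rfl⟩ _ ⟨p, lam, β, βp, hp, hlam, hβ, hβp, hfeas, rfl⟩
  exact egObjective_le_egDualObjective hB hBp ⟨⟨hx01, hxs⟩, hu, hup⟩ hp hlam hβ hβp hfeas
end
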